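/- arXiv:1107.2694 — 8 statements merged into one kernel-verified Lean document; each statement's English description precedes it below -/
import Mathlib

section
/- For every positive integer k there exists a constant C(k), depending only on k, with the following property: for every α ∈ (0,1] and every function v ∈ C^k(ℝ) such that v does not change sign on ℝ (either v(x) ≥ 0 for all x or v(x) ≤ 0 for all x), v' does not change sign on ℝ, and the k-th derivative v^{(k)} is α-Hölder continuous on ℝ with constant H, one has |v'(x)|^{k+α} ≤ C(k) · |v(x)|^{k+α-1} · H for every x ∈ ℝ. -/
/-!
Fix `k + 1` nodes `z ∈ [0, 1]` and the weights `w` of the finite-difference formula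
`P'(0) = ∑ w_z P(z)`, exact on polynomials of degree `≤ k`. Applied to the Taylor polynomial of
`v` at `x` rescaled by a step `h`, together with the Hölder bound on the Taylor remainder, it gives
`|v'(x) h| ≤ ∑ |w_z| (|v(x + z h)| + H |h|^(k+α))`. As `|v|` is monotone, the sign of `h` can be
chosen so that `|v(x + z h)| ≤ |v(x)|`; hence `|v'(x)| t ≤ A (|v(x)| + H t^(k+α))` for all `t > 0`,
where `A = ∑ |w_z|`, and the choice `t^(k+α) = |v(x)| / H` yields the inequality with
`C = (2A)^(k+α) ≤ (2A+1)^(k+1)`.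
-/

open Finset Polynomial Filter Topology
open scoped Nat

theorem Lagrange.eval_derivative_eq_sum {F : Type*} [Field F] [DecidableEq F] {s : Finset F}
    {P : F[X]} (hP : P.degree < #s) (x : F) :
    P.derivative.eval x = ∑ z ∈ s, (Lagrange.basis s id z).derivative.eval x * P.eval z := by
  conv_lhs => rw [Lagrange.eq_interpolate (Set.injOn_id _) hP, Lagrange.interpolate_apply]
  simp only [derivative_sum, derivative_C_mul, eval_finsetSum, eval_mul, eval_C, id]
  exact sum_congr rfl fun z _ => mul_comm _ _

theorem abs_sub_taylor_le_of_holder {k : ℕ} {v : ℝ → ℝ} {α H : ℝ} (hv : ContDiff ℝ k v)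
    (hα : 0 ≤ α) (hH : 0 ≤ H)
    (hhol : ∀ x y, |iteratedDeriv k v y - iteratedDeriv k v x| ≤ H * |y - x| ^ α) (x y : ℝ) :
    |v y - ∑ i ∈ range (k + 1), iteratedDeriv i v x * (y - x) ^ i / i !|
      ≤ H * |y - x| ^ ((k : ℝ) + α) := by
  cases k with
  | zero => simpa using hhol x y
  | succ n =>
    rcases eq_or_ne x y with rfl | hxy
    · simp [sum_range_succ', Real.zero_rpow (by positivity : (n : ℝ) + 1 + α ≠ 0)]
    obtain ⟨ξ, hξ, hrem⟩ := taylor_mean_remainder_lagrange_iteratedDeriv hxy hv.contDiffOn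
    have htaylor : taylorWithinEval v n (Set.uIcc x y) x y
        = ∑ i ∈ range (n + 1), iteratedDeriv i v x * (y - x) ^ i / i ! := by
      rw [taylor_within_apply]
      refine sum_congr rfl fun i hi => ?_
      rw [iteratedDerivWithin_eq_iteratedDeriv (uniqueDiffOn_uIcc hxy)
        (hv.contDiffAt.of_le (by exact_mod_cast (mem_range.1 hi).le))
        Set.left_mem_uIcc, smul_eq_mul]
      ring
    have hξx : |ξ - x| ≤ |y - x| := Set.abs_sub_left_of_mem_uIcc (Set.uIoo_subset_uIcc_self hξ)
    rw [sum_range_succ, ← htaylor, ← sub_sub, hrem, ← sub_div, ← sub_mul, abs_div, abs_mul,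
      abs_pow, Nat.abs_cast]
    calc |iteratedDeriv (n + 1) v ξ - iteratedDeriv (n + 1) v x| * |y - x| ^ (n + 1) / (n + 1)!
        ≤ |iteratedDeriv (n + 1) v ξ - iteratedDeriv (n + 1) v x| * |y - x| ^ (n + 1) :=
          div_le_self (by positivity) (mod_cast (n + 1).factorial_pos)
      _ ≤ H * |y - x| ^ α * |y - x| ^ (n + 1) := by
          gcongr
          exact (hhol x ξ).trans (by gcongr)
      _ = H * |y - x| ^ (((n + 1 : ℕ) : ℝ) + α) := by
          rw [mul_assoc, add_comm _ α, Real.rpow_add_of_nonneg (abs_nonneg _) hα (by positivity),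
            Real.rpow_natCast]

noncomputable def derivWeight (s : Finset ℝ) (z : ℝ) : ℝ :=
  (Lagrange.basis s id z).derivative.eval 0

theorem abs_deriv_mul_le_sum {k : ℕ} (hk : k ≠ 0) {s : Finset ℝ} (hs : k < #s) {v : ℝ → ℝ}
    {α H : ℝ} (hv : ContDiff ℝ k v) (hα : 0 ≤ α) (hH : 0 ≤ H)
    (hhol : ∀ x y, |iteratedDeriv k v y - iteratedDeriv k v x| ≤ H * |y - x| ^ α) (x h : ℝ) :
    |deriv v x * h|
      ≤ ∑ z ∈ s, |derivWeight s z| * (|v (x + z * h)| + H * |z * h| ^ ((k : ℝ) + α)) := by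
  set Q : ℝ[X] := ∑ i ∈ range (k + 1), C (iteratedDeriv i v x * h ^ i / i !) * X ^ i
  have hQdeg : Q.degree < #s := by
    refine (mem_degreeLT.1 (sum_mem fun i hi => mem_degreeLT.2 ?_)).trans_le (mod_cast hs)
    exact (degree_C_mul_X_pow_le _ _).trans_lt (mod_cast mem_range.1 hi)
  have hQderiv : Q.derivative.eval 0 = deriv v x * h := by
    simp [Q, ← coeff_zero_eq_eval_zero, coeff_derivative, Nat.pos_of_ne_zero hk]
  have hQeval (z : ℝ) :
      Q.eval z = ∑ i ∈ range (k + 1), iteratedDeriv i v x * (x + z * h - x) ^ i / i ! := by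
    simp only [Q, eval_finsetSum, eval_mul, eval_C, eval_pow, eval_X, add_sub_cancel_left]
    exact sum_congr rfl fun i _ => by ring
  rw [← hQderiv, Lagrange.eval_derivative_eq_sum hQdeg]
  refine (abs_sum_le_sum_abs _ _).trans (sum_le_sum fun z _ => ?_)
  rw [abs_mul, derivWeight]
  gcongr
  have htaylor := abs_sub_taylor_le_of_holder hv hα hH hhol x (x + z * h)
  rw [← hQeval, add_sub_cancel_left] at htaylor
  linarith [abs_sub_abs_le_abs_sub (Q.eval z) (v (x + z * h)),
    abs_sub_comm (Q.eval z) (v (x + z * h))]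

theorem monotone_or_antitone_abs {α β : Type*} [Preorder α] [AddCommGroup β] [LinearOrder β]
    [IsOrderedAddMonoid β] {f : α → β} (hsign : (∀ x, 0 ≤ f x) ∨ (∀ x, f x ≤ 0))
    (hf : Monotone f ∨ Antitone f) : Monotone (fun x => |f x|) ∨ Antitone (fun x => |f x|) := by
  rcases hsign with hpos | hneg
  · simp only [abs_of_nonneg (hpos _)]
    exact hf
  · simp only [abs_of_nonpos (hneg _)]
    exact hf.symm.imp Antitone.neg Monotone.neg

theorem abs_deriv_mul_le {k : ℕ} (hk : k ≠ 0) {s : Finset ℝ} (hs : k < #s)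
    (hs01 : (s : Set ℝ) ⊆ Set.Icc 0 1) {v : ℝ → ℝ} {α H : ℝ} (hv : ContDiff ℝ k v)
    (hmono : Monotone (fun x => |v x|) ∨ Antitone (fun x => |v x|)) (hα : 0 ≤ α) (hH : 0 ≤ H)
    (hhol : ∀ x y, |iteratedDeriv k v y - iteratedDeriv k v x| ≤ H * |y - x| ^ α)
    (x : ℝ) {t : ℝ} (ht : 0 ≤ t) :
    |deriv v x| * t ≤ (∑ z ∈ s, |derivWeight s z|) * (|v x| + H * t ^ ((k : ℝ) + α)) := by
  obtain ⟨h, hht, hdecr⟩ : ∃ h, |h| = t ∧ ∀ z ∈ Set.Icc (0 : ℝ) 1, |v (x + z * h)| ≤ |v x| := by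
    rcases hmono with hm | ha
    · exact ⟨-t, by simp [ht], fun z hz => hm (by nlinarith [hz.1])⟩
    · exact ⟨t, abs_of_nonneg ht, fun z hz => ha (by nlinarith [hz.1])⟩
  calc |deriv v x| * t = |deriv v x * h| := by rw [abs_mul, hht]
    _ ≤ ∑ z ∈ s, |derivWeight s z| * (|v (x + z * h)| + H * |z * h| ^ ((k : ℝ) + α)) :=
      abs_deriv_mul_le_sum hk hs hv hα hH hhol x h
    _ ≤ ∑ z ∈ s, |derivWeight s z| * (|v x| + H * t ^ ((k : ℝ) + α)) := by
      refine sum_le_sum fun z hz => ?_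
      have hz01 := hs01 hz
      have hzh : |z * h| ≤ t := by
        rw [abs_mul, hht, abs_of_nonneg hz01.1]
        exact mul_le_of_le_one_left ht hz01.2
      exact mul_le_mul_of_nonneg_left (add_le_add (hdecr z hz01) (by gcongr)) (abs_nonneg _)
    _ = _ := (sum_mul _ _ _).symm

theorem rpow_le_of_forall_pos_mul_le_of_pos {D V H a E : ℝ} (hD : 0 ≤ D) (hV : 0 < V)
    (hH : 0 < H) (ha : 0 ≤ a) (hE : 0 < E) (h : ∀ t > 0, D * t ≤ a * (V + H * t ^ E)) :
    D ^ E ≤ (2 * a) ^ E * V ^ (E - 1) * H := by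
  -- the two terms on the right balance at `t ^ E = V / H`
  set t := (V / H) ^ E⁻¹
  have ht : 0 < t := by positivity
  have htE : t ^ E = V / H := by
    rw [← Real.rpow_mul (by positivity), inv_mul_cancel₀ hE.ne', Real.rpow_one]
  have hDt : D ≤ 2 * a * V / t := by
    rw [le_div_iff₀ ht]
    calc D * t ≤ a * (V + H * (V / H)) := htE ▸ h t ht
      _ = 2 * a * V := by field_simp; ring
  calc D ^ E ≤ (2 * a * V / t) ^ E := by gcongr
    _ = (2 * a) ^ E * V ^ (E - 1) * H := by
      rw [Real.div_rpow (by positivity) ht.le, htE, Real.mul_rpow (by positivity) hV.le,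
        Real.rpow_sub_one hV.ne']
      field_simp

theorem rpow_le_of_forall_pos_mul_le {D V H a E : ℝ} (hD : 0 ≤ D) (hV : 0 ≤ V) (hH : 0 ≤ H)
    (ha : 0 ≤ a) (hE : 1 < E) (h : ∀ t > 0, D * t ≤ a * (V + H * t ^ E)) :
    D ^ E ≤ (2 * a) ^ E * V ^ (E - 1) * H := by
  have hlim : Tendsto (fun ε => (2 * a) ^ E * (V + ε) ^ (E - 1) * (H + ε)) (𝓝[>] 0)
      (𝓝 ((2 * a) ^ E * V ^ (E - 1) * H)) := by
    refine tendsto_nhdsWithin_of_tendsto_nhds ?_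
    have hcont : ContinuousAt (fun ε => (2 * a) ^ E * (V + ε) ^ (E - 1) * (H + ε)) 0 :=
      (((continuousAt_const.add continuousAt_id).rpow_const (Or.inr (by linarith))).const_mul
        _).mul (continuousAt_const.add continuousAt_id)
    simpa using hcont.tendsto
  refine ge_of_tendsto hlim (eventually_nhdsWithin_of_forall fun ε (hε : 0 < ε) => ?_)
  refine rpow_le_of_forall_pos_mul_le_of_pos hD (by linarith) (by linarith) ha (by linarith)
    fun t ht => (h t ht).trans ?_
  gcongr <;> linarith

/-- **Higher order Glaeser inequality on ℝ.**
For every positive integer `k` there exists a constant `C(k)`, depending only on `k`,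
such that for every `α ∈ (0,1]` and every `v ∈ C^k(ℝ)` whose values and whose first
derivative do not change sign on ℝ, and whose `k`-th derivative is `α`-Hölder continuous
with constant `H`, one has `|v'(x)|^(k+α) ≤ C(k) · |v(x)|^(k+α-1) · H` for all `x`. -/
theorem higher_order_glaeser_inequality (k : ℕ) (hk : 0 < k) :
    ∃ C : ℝ, ∀ α : ℝ, α ∈ Set.Ioc (0 : ℝ) 1 → ∀ v : ℝ → ℝ,
      ContDiff ℝ (k : ℕ∞) v →
      ((∀ x : ℝ, 0 ≤ v x) ∨ (∀ x : ℝ, v x ≤ 0)) →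
      ((∀ x : ℝ, 0 ≤ deriv v x) ∨ (∀ x : ℝ, deriv v x ≤ 0)) →
      ∀ H : ℝ, 0 ≤ H →
      (∀ x y : ℝ, |iteratedDeriv k v y - iteratedDeriv k v x| ≤ H * |y - x| ^ α) →
      ∀ x : ℝ, |deriv v x| ^ ((k : ℝ) + α) ≤ C * |v x| ^ ((k : ℝ) + α - 1) * H := by
  obtain ⟨s, hs01, hcard⟩ := (Set.Icc_infinite (zero_lt_one' ℝ)).exists_subset_card_eq (k + 1)
  set A := ∑ z ∈ s, |derivWeight s z|
  have hA : 0 ≤ A := sum_nonneg fun _ _ => abs_nonneg _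
  refine ⟨(2 * A + 1) ^ (k + 1), fun α ⟨hα, _⟩ v hv hsign hderiv H hH hhol x => ?_⟩
  have hdiff : Differentiable ℝ v := hv.differentiable (mod_cast hk.ne')
  have hmono := monotone_or_antitone_abs hsign
    (hderiv.imp (monotone_of_deriv_nonneg hdiff) (antitone_of_deriv_nonpos hdiff))
  have hkα : 1 < (k : ℝ) + α := by linarith [(Nat.one_le_cast (α := ℝ)).2 hk]
  calc |deriv v x| ^ ((k : ℝ) + α) ≤ (2 * A) ^ ((k : ℝ) + α) * |v x| ^ ((k : ℝ) + α - 1) * H :=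
        rpow_le_of_forall_pos_mul_le (abs_nonneg _) (abs_nonneg _) hH hA hkα fun t ht =>
          abs_deriv_mul_le hk.ne' (by omega) hs01 hv hmono hα.le hH hhol x ht.le
    _ ≤ (2 * A + 1) ^ (k + 1) * |v x| ^ ((k : ℝ) + α - 1) * H := by
        gcongr
        calc (2 * A) ^ ((k : ℝ) + α) ≤ (2 * A + 1) ^ ((k : ℝ) + α) := by gcongr; linarith
          _ ≤ (2 * A + 1) ^ ((k + 1 : ℕ) : ℝ) :=
            Real.rpow_le_rpow_of_exponent_le (by linarith) (by push_cast; linarith)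
          _ = (2 * A + 1) ^ (k + 1) := Real.rpow_natCast _ _
end

section
/- There exists a constant C with the following property: for every α ∈ (0,1] and every function v ∈ C^1(ℝ) such that v does not change sign on ℝ (either v(x) ≥ 0 for all x or v(x) ≤ 0 for all x) and whose derivative v' is α-Hölder continuous on ℝ with constant H, one has |v'(x)|^{1+α} ≤ C · |v(x)|^{α} · H for every x ∈ ℝ (no sign assumption on v' is needed in the case k = 1). -/
/-!
Taylor's formula with Hölder remainder gives `0 ≤ v (x + t) ≤ v x + v' x * t + H |t| ^ (1 + α)`.
Stepping a distance `r` against the sign of `v' x`, with `r` chosen so that `H r ^ α = |v' x| / 2`,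
gives `|v' x| r ≤ 2 v x`; raising this to the power `α` yields the bound with `C = 4`.
-/

open Set

theorem norm_sub_sub_smul_deriv_le_of_holder {E : Type*} [NormedAddCommGroup E]
    [NormedSpace ℝ E] {f : ℝ → E} {α H : ℝ} (hf : Differentiable ℝ f) (hα : 0 ≤ α)
    (hH : 0 ≤ H) (hf' : ∀ x y, ‖deriv f y - deriv f x‖ ≤ H * |y - x| ^ α) (x y : ℝ) :
    ‖f y - f x - (y - x) • deriv f x‖ ≤ H * |y - x| ^ α * |y - x| := by
  have hderiv : ∀ s ∈ uIcc x y, HasDerivWithinAt (fun s ↦ f s - (s - x) • deriv f x)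
      (deriv f s - deriv f x) (uIcc x y) s := fun s _ ↦
    (((hf s).hasDerivAt.sub (((hasDerivAt_id s).sub_const x).smul_const
      (deriv f x))).congr_deriv (by rw [one_smul])).hasDerivWithinAt
  have hbound : ∀ s ∈ uIcc x y, ‖deriv f s - deriv f x‖ ≤ H * |y - x| ^ α := fun s hs ↦
    (hf' x s).trans <| mul_le_mul_of_nonneg_left
      (Real.rpow_le_rpow (abs_nonneg _) (abs_sub_left_of_mem_uIcc hs) hα) hH
  have := (convex_uIcc x y).norm_image_sub_le_of_norm_hasDerivWithin_le hderiv hbound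
    left_mem_uIcc right_mem_uIcc
  simpa [sub_right_comm] using this

theorem rpow_one_add_le_of_forall_mul_le {a b H α : ℝ} (hα₀ : 0 < α) (hα₁ : α ≤ 1)
    (hb : 0 ≤ b) (hH : 0 ≤ H) (h : ∀ r, 0 ≤ r → b * r ≤ a + H * r ^ α * r) :
    b ^ (1 + α) ≤ 4 * a ^ α * H := by
  have ha : 0 ≤ a := by simpa using h 0 le_rfl
  rcases hb.eq_or_lt with rfl | hb
  · rw [Real.zero_rpow (by positivity)]
    positivity
  rcases hH.eq_or_lt with rfl | hH
  · have := h ((a + 1) / b) (by positivity)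
    rw [mul_div_cancel₀ _ hb.ne'] at this
    linarith
  set r := (b / (2 * H)) ^ α⁻¹
  have hr : 0 < r := by positivity
  have hrα : r ^ α = b / (2 * H) := by
    rw [← Real.rpow_mul (by positivity), inv_mul_cancel₀ hα₀.ne', Real.rpow_one]
  have hbr : b * r ≤ 2 * a := by
    have := h r hr.le
    rw [hrα, show H * (b / (2 * H)) * r = b * r / 2 by field_simp] at this
    linarith
  have two_rpow : (2 : ℝ) ^ α ≤ 2 := by
    simpa using Real.rpow_le_rpow_of_exponent_le one_le_two hα₁
  calc b ^ (1 + α) = b ^ α * r ^ α * (2 * H) := by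
        rw [Real.rpow_one_add' hb.le (by positivity), hrα]; field_simp
    _ = (b * r) ^ α * (2 * H) := by rw [Real.mul_rpow hb.le hr.le]
    _ ≤ (2 * a) ^ α * (2 * H) := by gcongr
    _ = 2 ^ α * a ^ α * (2 * H) := by rw [Real.mul_rpow zero_le_two ha]
    _ ≤ 2 * a ^ α * (2 * H) := by gcongr
    _ = 4 * a ^ α * H := by ring

theorem abs_deriv_rpow_one_add_le_of_nonneg {v : ℝ → ℝ} {α H : ℝ} (hα₀ : 0 < α) (hα₁ : α ≤ 1)
    (hv : Differentiable ℝ v) (hv₀ : ∀ x, 0 ≤ v x) (hH : 0 ≤ H)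
    (hv' : ∀ x y, |deriv v y - deriv v x| ≤ H * |y - x| ^ α) (x : ℝ) :
    |deriv v x| ^ (1 + α) ≤ 4 * v x ^ α * H := by
  refine rpow_one_add_le_of_forall_mul_le hα₀ hα₁ (abs_nonneg _) hH fun r hr ↦ ?_
  obtain ⟨t, ht, hpt⟩ : ∃ t, |t| = r ∧ t * deriv v x = -(|deriv v x| * r) := by
    rcases le_total 0 (deriv v x) with hp | hp
    · exact ⟨-r, by simp [hr], by rw [abs_of_nonneg hp]; ring⟩
    · exact ⟨r, abs_of_nonneg hr, by rw [abs_of_nonpos hp]; ring⟩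
  have htaylor := norm_sub_sub_smul_deriv_le_of_holder hv hα₀.le hH hv' x (x + t)
  rw [add_sub_cancel_left, smul_eq_mul, hpt, ht, Real.norm_eq_abs] at htaylor
  linarith [(le_abs_self _).trans htaylor, hv₀ (x + t)]

/-- **Glaeser-type inequality for `k = 1`.**
There exists a constant `C` such that for every `α ∈ (0,1]` and every `v ∈ C^1(ℝ)` that
does not change sign on ℝ and whose derivative is `α`-Hölder continuous with constant `H`,
one has `|v'(x)|^(1+α) ≤ C · |v(x)|^α · H` for all `x` (no sign assumption on `v'`). -/
theorem glaeser_inequality_k_one :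
    ∃ C : ℝ, ∀ α : ℝ, α ∈ Set.Ioc (0 : ℝ) 1 → ∀ v : ℝ → ℝ,
      ContDiff ℝ 1 v →
      ((∀ x : ℝ, 0 ≤ v x) ∨ (∀ x : ℝ, v x ≤ 0)) →
      ∀ H : ℝ, 0 ≤ H →
      (∀ x y : ℝ, |deriv v y - deriv v x| ≤ H * |y - x| ^ α) →
      ∀ x : ℝ, |deriv v x| ^ (1 + α) ≤ C * |v x| ^ α * H := by
  refine ⟨4, fun α ⟨hα₀, hα₁⟩ v hv hsign H hH hv' x ↦ ?_⟩
  have hvd := hv.differentiable one_ne_zero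
  rcases hsign with hv₀ | hv₀
  · rw [abs_of_nonneg (hv₀ x)]
    exact abs_deriv_rpow_one_add_le_of_nonneg hα₀ hα₁ hvd hv₀ hH hv' x
  · have hv'_neg : ∀ x y, |deriv (-v) y - deriv (-v) x| ≤ H * |y - x| ^ α := fun x y ↦ by
      simpa only [deriv.neg, neg_sub_neg, abs_sub_comm] using hv' x y
    simpa [abs_of_nonpos (hv₀ x)] using abs_deriv_rpow_one_add_le_of_nonneg hα₀ hα₁ hvd.neg
      (fun x ↦ neg_nonneg.mpr (hv₀ x)) hH hv'_neg x
end

section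
/- For every positive integer k there exists a positive constant δ_k, depending only on k, such that: for every polynomial P(x) with real coefficients, of degree at most k, satisfying P(0) = 1 and P'(0) = -1, there exists x ∈ [0, δ_k] such that either P(x) ≤ -1 or P'(x) ≥ 1. -/
/-!
If `P > -1` and `P' < 1` on `[0, δ]`, then `-1 < P x ≤ 1 + x` there, so `|P| ≤ 2δ` on `[0, δ]`.
On polynomials of degree `≤ k`, the second derivative on `[0, 1]` is at most a constant `B` times
the sup norm (write the polynomial as a Lagrange interpolant at `k + 1` fixed nodes), and rescaling
`[0, 1]` to `[0, δ]` gains a factor `δ⁻²` for `P''`. Hence `|P''| ≤ 2B/δ`, which for `δ` large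
keeps `P' ≤ -2/3` on `[0, 3]` starting from `P'(0) = -1`, and then `P(3) ≤ -1`.
-/

open Polynomial Set

namespace Polynomial

theorem eval_sub_le_mul_sub_of_derivative_le {p : ℝ[X]} {a b c : ℝ} (hab : a ≤ b)
    (h : ∀ t ∈ Icc a b, p.derivative.eval t ≤ c) : p.eval b - p.eval a ≤ c * (b - a) :=
  (convex_Icc a b).image_sub_le_mul_sub_of_deriv_le p.continuous.continuousOn
    p.differentiable.differentiableOn
    (fun t ht => by rw [Polynomial.deriv]; exact h t (interior_subset ht))
    a (left_mem_Icc.2 hab) b (right_mem_Icc.2 hab) hab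

theorem iterate_derivative_comp_C_mul_X {R : Type*} [CommSemiring R] (p : R[X]) (a : R)
    (m : ℕ) :
    derivative^[m] (p.comp (C a * X)) = C (a ^ m) * (derivative^[m] p).comp (C a * X) := by
  induction m generalizing p with
  | zero => simp
  | succ m ih =>
    simp only [Function.iterate_succ_apply, derivative_comp, derivative_C_mul_X]
    rw [iterate_derivative_C_mul, ih, pow_succ', C_mul, mul_assoc]

theorem exists_abs_eval_iterate_derivative_le_of_nodes (s : Finset ℝ) (m : ℕ) {K : Set ℝ}
    (hK : IsCompact K) :
    ∃ B, ∀ p : ℝ[X], p.degree < s.card → ∀ M, (∀ v ∈ s, |p.eval v| ≤ M) →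
      ∀ x ∈ K, |(derivative^[m] p).eval x| ≤ B * M := by
  choose B hB using fun v : ℝ => hK.exists_bound_of_continuousOn
    (derivative^[m] (Lagrange.basis s id v)).continuous.continuousOn
  refine ⟨∑ v ∈ s, B v, fun p hp M hM x hx => ?_⟩
  rw [Lagrange.eq_interpolate (injOn_id _) hp, Lagrange.interpolate_apply, iterate_derivative_sum,
    eval_finsetSum, Finset.sum_mul]
  refine (Finset.abs_sum_le_sum_abs _ _).trans (Finset.sum_le_sum fun v hv => ?_)
  rw [iterate_derivative_C_mul, eval_mul, eval_C, abs_mul, mul_comm (B v)]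
  exact mul_le_mul (hM v hv) (hB v x hx) (abs_nonneg _) ((abs_nonneg _).trans (hM v hv))

theorem exists_abs_eval_iterate_derivative_le_on_unit_interval (n m : ℕ) :
    ∃ B, ∀ p : ℝ[X], p.natDegree ≤ n → ∀ M, (∀ x ∈ Icc (0 : ℝ) 1, |p.eval x| ≤ M) →
      ∀ x ∈ Icc (0 : ℝ) 1, |(derivative^[m] p).eval x| ≤ B * M := by
  obtain ⟨s, hs, hcard⟩ := (Icc_infinite (zero_lt_one' ℝ)).exists_subset_card_eq (n + 1)
  obtain ⟨B, hB⟩ := exists_abs_eval_iterate_derivative_le_of_nodes s m isCompact_Icc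
  refine ⟨B, fun p hp M hM => hB p ?_ M fun v hv => hM v (hs hv)⟩
  rw [hcard]
  exact degree_lt_iff_coeff_zero _ _ |>.2 fun j hj => coeff_eq_zero_of_natDegree_lt (by omega)

theorem exists_pow_mul_abs_eval_iterate_derivative_le (n m : ℕ) :
    ∃ B, ∀ δ : ℝ, 0 < δ → ∀ p : ℝ[X], p.natDegree ≤ n → ∀ M, (∀ x ∈ Icc 0 δ, |p.eval x| ≤ M) →
      ∀ x ∈ Icc 0 δ, δ ^ m * |(derivative^[m] p).eval x| ≤ B * M := by
  obtain ⟨B, hB⟩ := exists_abs_eval_iterate_derivative_le_on_unit_interval n m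
  refine ⟨B, fun δ hδ p hp M hM x hx => ?_⟩
  have hscale : ∀ y ∈ Icc (0 : ℝ) 1, δ * y ∈ Icc 0 δ := fun y hy =>
    ⟨mul_nonneg hδ.le hy.1, mul_le_of_le_one_right hδ.le hy.2⟩
  have hdeg : (p.comp (C δ * X)).natDegree ≤ n :=
    natDegree_comp_le.trans (by simpa [natDegree_C_mul_X _ hδ.ne'] using hp)
  have hq := hB _ hdeg M (fun y hy => by simpa using hM _ (hscale y hy)) (x / δ)
    ⟨div_nonneg hx.1 hδ.le, div_le_one_of_le₀ hx.2 hδ.le⟩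
  rwa [iterate_derivative_comp_C_mul_X, eval_mul, eval_C, eval_comp, eval_mul, eval_C, eval_X,
    mul_div_cancel₀ _ hδ.ne', abs_mul, abs_pow, abs_of_pos hδ] at hq

end Polynomial

theorem magic_constants_part_one_general (k : ℕ) :
    ∃ δ : ℝ, 0 < δ ∧ ∀ P : Polynomial ℝ, P.natDegree ≤ k →
      P.eval 0 = 1 → P.derivative.eval 0 = -1 →
      ∃ x ∈ Set.Icc (0 : ℝ) δ, P.eval x ≤ -1 ∨ 1 ≤ P.derivative.eval x := by
  obtain ⟨B, hB⟩ := exists_pow_mul_abs_eval_iterate_derivative_le k 2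
  set δ : ℝ := 3 + 18 * |B|
  have hδ3 : 3 ≤ δ := by linarith [abs_nonneg B]
  refine ⟨δ, by positivity, fun P hP hP0 hP'0 => ?_⟩
  by_contra! hcon
  have hbound : ∀ x ∈ Icc 0 δ, |P.eval x| ≤ 2 * δ := fun x hx => by
    have hgrowth := eval_sub_le_mul_sub_of_derivative_le hx.1
      fun t ht => (hcon t ⟨ht.1, ht.2.trans hx.2⟩).2.le
    rw [abs_le]
    constructor <;> linarith [(hcon x hx).1, hx.2]
  have hsecond : ∀ x ∈ Icc 0 δ, P.derivative.derivative.eval x ≤ 1 / 9 := fun x hx => by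
    have hB' : B * (2 * δ) ≤ δ ^ 2 * (1 / 9) := by nlinarith [le_abs_self B, abs_nonneg B]
    exact (le_abs_self _).trans
      (le_of_mul_le_mul_left ((hB δ (by positivity) P hP _ hbound x hx).trans hB') (by positivity))
  have h3 : (3 : ℝ) ∈ Icc 0 δ := ⟨by norm_num, hδ3⟩
  have hfirst : ∀ t ∈ Icc (0 : ℝ) 3, P.derivative.eval t ≤ -2 / 3 := fun t ht => by
    have hgrowth := eval_sub_le_mul_sub_of_derivative_le ht.1
      fun u hu => hsecond u ⟨hu.1, hu.2.trans (ht.2.trans h3.2)⟩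
    linarith [ht.2]
  have hdrop := eval_sub_le_mul_sub_of_derivative_le (by norm_num : (0 : ℝ) ≤ 3) hfirst
  linarith [(hcon 3 h3).1]

/-- **Magic constants, part (1).**
For every positive integer `k` there exists `δ_k > 0`, depending only on `k`, such that
every real polynomial `P` of degree at most `k` with `P(0) = 1` and `P'(0) = -1`
satisfies `P(x) ≤ -1` or `P'(x) ≥ 1` for some `x ∈ [0, δ_k]`. -/
theorem magic_constants_part_one (k : ℕ) (hk : 0 < k) :
    ∃ δ : ℝ, 0 < δ ∧ ∀ P : Polynomial ℝ, P.natDegree ≤ k →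
      P.eval 0 = 1 → P.derivative.eval 0 = -1 →
      ∃ x ∈ Set.Icc (0 : ℝ) δ, P.eval x ≤ -1 ∨ 1 ≤ P.derivative.eval x :=
  magic_constants_part_one_general k
end

section
/- Let k be a positive integer, α ∈ (0,1], x₀ ∈ ℝ, and d > 0. Let v ∈ C^k((x₀-d, x₀+d)) be such that v does not change sign on (x₀-d, x₀+d) and v' does not change sign on (x₀-d, x₀+d), and such that v^{(k)} is α-Hölder continuous on (x₀-d, x₀+d) with constant H. Then there exists a constant C(k), depending only on k, such that |v'(x₀)|^{k+α} ≤ C(k) · |v(x₀)|^{k+α-1} · max{ H, |v'(x₀)| / d^{k+α-1} }. -/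
/-!
Expand `v` to order `k` at `x₀`: the Hölder condition on `v^(k)` bounds the Taylor remainder by
`H |y - x₀|^(k+α)`. Because `v` and `v'` have constant signs, `|v|` is monotone, so on one of the
segments `[x₀ - r, x₀]`, `[x₀, x₀ + r]` we have `|v| ≤ |v x₀|`, and the Taylor polynomial is bounded
there by `|v x₀| + H r^(k+α)`. A Markov-type inequality for polynomials of degree `≤ k` (with a
constant from Lagrange interpolation) turns this into `r |v' x₀| ≤ C (|v x₀| + H r^(k+α))` for all
`0 < r < d`. Choosing `r` with `H r^(k+α) ≈ |v x₀|`, or `r = d` when that is too large, gives the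
inequality.
-/

open Set Polynomial Filter Topology
open scoped Nat

noncomputable def markovConst (k : ℕ) : ℝ :=
  1 + ∑ i ∈ Finset.range (k + 1),
    |(Lagrange.basis (Finset.range (k + 1)) (fun i : ℕ => (i : ℝ) / (k + 1)) i).derivative.eval 0|

theorem one_le_markovConst (k : ℕ) : 1 ≤ markovConst k :=
  le_add_of_nonneg_right (Finset.sum_nonneg fun _ _ => abs_nonneg _)

theorem Polynomial.abs_derivative_eval_zero_le {k : ℕ} {P : ℝ[X]} (hP : P.natDegree ≤ k) {A : ℝ}
    (hA : ∀ t ∈ Icc (0 : ℝ) 1, |P.eval t| ≤ A) :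
    |P.derivative.eval 0| ≤ markovConst k * A := by
  set s := Finset.range (k + 1)
  set ν : ℕ → ℝ := fun i => i / (k + 1)
  set b := fun i => (Lagrange.basis s ν i).derivative.eval 0
  have hν : InjOn ν s := fun i _ j _ hij => by
    exact_mod_cast (div_left_inj' (Nat.cast_add_one_ne_zero k : (k : ℝ) + 1 ≠ 0)).1 hij
  have hνI : ∀ i ∈ s, ν i ∈ Icc (0 : ℝ) 1 := fun i hi => by
    have : (i : ℝ) ≤ k + 1 := by exact_mod_cast (Finset.mem_range.1 hi).le
    exact ⟨by positivity, div_le_one_of_le₀ this (by positivity)⟩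
  have hA0 : 0 ≤ A := (abs_nonneg _).trans (hA 0 ⟨le_rfl, zero_le_one⟩)
  have hdeg : P.degree < s.card := by
    rw [Finset.card_range]
    exact (degree_le_natDegree).trans_lt (by exact_mod_cast Nat.lt_succ_of_le hP)
  have hinterp : P.derivative.eval 0 = ∑ i ∈ s, P.eval (ν i) * b i := by
    conv_lhs => rw [Lagrange.eq_interpolate hν hdeg]
    simp [Lagrange.interpolate_apply, b, eval_finsetSum]
  calc |P.derivative.eval 0| ≤ ∑ i ∈ s, |P.eval (ν i)| * |b i| := by
        rw [hinterp]
        exact (Finset.abs_sum_le_sum_abs _ _).trans_eq (by simp only [abs_mul])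
    _ ≤ ∑ i ∈ s, A * |b i| :=
        Finset.sum_le_sum fun i hi => mul_le_mul_of_nonneg_right (hA _ (hνI i hi)) (abs_nonneg _)
    _ ≤ markovConst k * A := by
        rw [← Finset.mul_sum, mul_comm, markovConst]
        exact mul_le_mul_of_nonneg_right (le_add_of_nonneg_left zero_le_one) hA0

theorem Polynomial.abs_mul_abs_derivative_eval_zero_le {k : ℕ} {P : ℝ[X]} (hP : P.natDegree ≤ k)
    {A c : ℝ} (hA : ∀ t ∈ Icc (0 : ℝ) 1, |P.eval (c * t)| ≤ A) :
    |c| * |P.derivative.eval 0| ≤ markovConst k * A := by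
  have hdeg : (P.comp (C c * X)).natDegree ≤ k :=
    natDegree_comp_le.trans <| by
      simpa using Nat.mul_le_mul hP ((natDegree_C_mul_le c X).trans natDegree_X_le)
  simpa [derivative_comp, abs_mul] using
    abs_derivative_eval_zero_le hdeg (A := A) (by simpa using hA)

noncomputable def taylorPolynomial (f : ℝ → ℝ) (n : ℕ) (s : Set ℝ) (x₀ : ℝ) : ℝ[X] :=
  ∑ i ∈ Finset.range (n + 1), C (taylorCoeffWithin f i s x₀) * X ^ i

theorem eval_taylorPolynomial (f : ℝ → ℝ) (n : ℕ) (s : Set ℝ) (x₀ x : ℝ) :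
    (taylorPolynomial f n s x₀).eval (x - x₀) = taylorWithinEval f n s x₀ x := by
  simp only [taylorPolynomial, taylor_within_apply, eval_finsetSum, eval_mul, eval_C, eval_pow,
    eval_X, taylorCoeffWithin, smul_eq_mul]
  exact Finset.sum_congr rfl fun _ _ => by ring

theorem natDegree_taylorPolynomial_le (f : ℝ → ℝ) (n : ℕ) (s : Set ℝ) (x₀ : ℝ) :
    (taylorPolynomial f n s x₀).natDegree ≤ n :=
  natDegree_sum_le_of_forall_le _ _ fun i hi =>
    (natDegree_C_mul_X_pow_le _ i).trans (Nat.lt_succ_iff.1 (Finset.mem_range.1 hi))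

theorem derivative_taylorPolynomial_eval_zero (f : ℝ → ℝ) (n : ℕ) (s : Set ℝ) (x₀ : ℝ) :
    (taylorPolynomial f (n + 1) s x₀).derivative.eval 0 = derivWithin f s x₀ := by
  rw [← coeff_zero_eq_eval_zero, coeff_derivative, taylorPolynomial, finsetSum_coeff]
  simp only [coeff_C_mul_X_pow]
  simp [taylorCoeffWithin]

theorem abs_sub_taylorWithinEval_le {f : ℝ → ℝ} {s : Set ℝ} (hs : IsOpen s) {n : ℕ}
    (hf : ContDiffOn ℝ (n + 1) f s) {x₀ x : ℝ} (hx : uIcc x₀ x ⊆ s) {H α : ℝ} (hH : 0 ≤ H)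
    (hα : 0 ≤ α) (hholder : ∀ y ∈ uIcc x₀ x,
      |iteratedDerivWithin (n + 1) f s y - iteratedDerivWithin (n + 1) f s x₀| ≤ H * |y - x₀| ^ α) :
    |f x - taylorWithinEval f (n + 1) s x₀ x| ≤ H * |x - x₀| ^ ((n + 1 : ℕ) + α) / (n + 1)! := by
  rcases eq_or_ne x₀ x with rfl | hne
  · rw [taylorWithinEval_self, sub_self, sub_self, abs_zero, Real.zero_rpow (by positivity),
      mul_zero, zero_div]
  obtain ⟨ξ, hξ, hrem⟩ := taylor_mean_remainder_lagrange_iteratedDeriv hne (hf.mono hx)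
  have hx₀ : x₀ ∈ uIcc x₀ x := left_mem_uIcc
  have hξs : ξ ∈ uIcc x₀ x := uIoo_subset_uIcc_self hξ
  have hwithin : ∀ i ≤ n, iteratedDerivWithin i f (uIcc x₀ x) x₀ = iteratedDerivWithin i f s x₀ :=
    fun i hi => by
      rw [iteratedDerivWithin_eq_iteratedDeriv (uniqueDiffOn_uIcc hne)
        ((hf.contDiffAt (hs.mem_nhds (hx hx₀))).of_le (by exact_mod_cast hi.trans n.le_succ)) hx₀,
        iteratedDerivWithin_of_isOpen hs (hx hx₀)]
  have htaylor : taylorWithinEval f n (uIcc x₀ x) x₀ x = taylorWithinEval f n s x₀ x := by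
    simp only [taylor_within_apply]
    exact Finset.sum_congr rfl fun i hi => by
      rw [hwithin i (Nat.lt_succ_iff.1 (Finset.mem_range.1 hi))]
  rw [htaylor, ← iteratedDerivWithin_of_isOpen hs (hx hξs)] at hrem
  have hremainder : f x - taylorWithinEval f (n + 1) s x₀ x =
      (iteratedDerivWithin (n + 1) f s ξ - iteratedDerivWithin (n + 1) f s x₀) *
        (x - x₀) ^ (n + 1) / (n + 1)! := by
    rw [taylorWithinEval_succ, ← sub_sub, hrem, Nat.factorial_succ]
    push_cast
    ring
  rw [hremainder, abs_div, abs_mul, abs_pow, Nat.abs_cast]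
  refine div_le_div_of_nonneg_right ?_ (by positivity)
  calc |iteratedDerivWithin (n + 1) f s ξ - iteratedDerivWithin (n + 1) f s x₀| * |x - x₀| ^ (n + 1)
      ≤ H * |x - x₀| ^ α * |x - x₀| ^ (n + 1) := by
        gcongr
        exact (hholder ξ hξs).trans <| mul_le_mul_of_nonneg_left
          (Real.rpow_le_rpow (abs_nonneg _) (abs_sub_left_of_mem_uIcc hξs) hα) hH
    _ = H * |x - x₀| ^ ((n + 1 : ℕ) + α) := by
        rw [add_comm, Real.rpow_add (abs_pos.2 (sub_ne_zero.2 hne.symm)), Real.rpow_natCast]; ring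

theorem abs_mul_abs_derivWithin_le_markovConst_mul {f : ℝ → ℝ} {s : Set ℝ} (hs : IsOpen s)
    {n : ℕ} (hf : ContDiffOn ℝ (n + 1) f s) {x₀ c H α : ℝ} (hH : 0 ≤ H) (hα : 0 ≤ α)
    (hc : uIcc x₀ (x₀ + c) ⊆ s)
    (hholder : ∀ y ∈ uIcc x₀ (x₀ + c),
      |iteratedDerivWithin (n + 1) f s y - iteratedDerivWithin (n + 1) f s x₀| ≤ H * |y - x₀| ^ α)
    (hside : ∀ y ∈ uIcc x₀ (x₀ + c), |f y| ≤ |f x₀|) :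
    |c| * |derivWithin f s x₀| ≤
      markovConst (n + 1) * (|f x₀| + H * |c| ^ ((n + 1 : ℕ) + α)) := by
  rw [← derivative_taylorPolynomial_eval_zero f n s x₀]
  refine abs_mul_abs_derivative_eval_zero_le (natDegree_taylorPolynomial_le _ _ _ _) fun t ht => ?_
  set y := x₀ + c * t
  have hy : y ∈ uIcc x₀ (x₀ + c) := by
    rcases le_total 0 c with h | h <;> simp only [y, mem_uIcc] <;> [left; right] <;>
      constructor <;> nlinarith [ht.1, ht.2]
  have hsub : uIcc x₀ y ⊆ uIcc x₀ (x₀ + c) := uIcc_subset_uIcc_left hy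
  have hct : |c * t| ≤ |c| := by simpa [y] using abs_sub_left_of_mem_uIcc hy
  have htaylor := abs_sub_taylorWithinEval_le hs hf (hsub.trans hc) hH hα
    fun z hz => hholder z (hsub hz)
  rw [← eval_taylorPolynomial, add_sub_cancel_left] at htaylor
  calc |(taylorPolynomial f (n + 1) s x₀).eval (c * t)|
      = |f y - (f y - (taylorPolynomial f (n + 1) s x₀).eval (c * t))| := by rw [sub_sub_cancel]
    _ ≤ |f y| + |f y - (taylorPolynomial f (n + 1) s x₀).eval (c * t)| := abs_sub _ _
    _ ≤ |f x₀| + H * |c| ^ ((n + 1 : ℕ) + α) := by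
        refine add_le_add (hside y hy) (htaylor.trans ?_)
        calc H * |c * t| ^ ((n + 1 : ℕ) + α) / (n + 1)! ≤ H * |c * t| ^ ((n + 1 : ℕ) + α) :=
              div_le_self (by positivity) (by exact_mod_cast (n + 1).factorial_pos)
          _ ≤ H * |c| ^ ((n + 1 : ℕ) + α) := by
              gcongr

theorem monotoneOn_or_antitoneOn_of_derivWithin {f : ℝ → ℝ} {s : Set ℝ} (hs : IsOpen s)
    (hconv : Convex ℝ s) (hf : DifferentiableOn ℝ f s)
    (h : (∀ x ∈ s, 0 ≤ derivWithin f s x) ∨ ∀ x ∈ s, derivWithin f s x ≤ 0) :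
    MonotoneOn f s ∨ AntitoneOn f s := by
  have hderiv : ∀ x ∈ interior s, HasDerivWithinAt f (derivWithin f s x) (interior s) x := by
    rw [hs.interior_eq]
    exact fun x hx => (hf x hx).hasDerivWithinAt
  exact h.imp
    (fun h => monotoneOn_of_hasDerivWithinAt_nonneg hconv hf.continuousOn hderiv
      (by rwa [hs.interior_eq]))
    (fun h => antitoneOn_of_hasDerivWithinAt_nonpos hconv hf.continuousOn hderiv
      (by rwa [hs.interior_eq]))

theorem monotoneOn_abs_or_antitoneOn_abs {f : ℝ → ℝ} {s : Set ℝ}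
    (hsgn : (∀ x ∈ s, 0 ≤ f x) ∨ ∀ x ∈ s, f x ≤ 0) (hf : MonotoneOn f s ∨ AntitoneOn f s) :
    MonotoneOn (|f ·|) s ∨ AntitoneOn (|f ·|) s := by
  rcases hsgn with hpos | hneg
  · have heq : EqOn f (|f ·|) s := fun x hx => (abs_of_nonneg (hpos x hx)).symm
    exact hf.imp (·.congr heq) (·.congr heq)
  · have heq : EqOn (-f) (|f ·|) s := fun x hx => (abs_of_nonpos (hneg x hx)).symm
    exact hf.symm.imp (·.neg.congr heq) (·.neg.congr heq)

theorem exists_abs_eq_forall_mem_uIcc_abs_le {f : ℝ → ℝ} {s : Set ℝ}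
    (hf : MonotoneOn (|f ·|) s ∨ AntitoneOn (|f ·|) s) {x₀ r : ℝ} (hr : 0 ≤ r)
    (hs : Icc (x₀ - r) (x₀ + r) ⊆ s) :
    ∃ c, |c| = r ∧ uIcc x₀ (x₀ + c) ⊆ s ∧ ∀ y ∈ uIcc x₀ (x₀ + c), |f y| ≤ |f x₀| := by
  have hx₀ : x₀ ∈ s := hs ⟨by linarith, by linarith⟩
  rcases hf with hmono | hanti
  · refine ⟨-r, by simp [abs_of_nonneg hr], ?_, fun y hy => ?_⟩
    · rw [uIcc_of_ge (by linarith), ← sub_eq_add_neg]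
      exact (Icc_subset_Icc le_rfl (by linarith)).trans hs
    rw [uIcc_of_ge (by linarith), ← sub_eq_add_neg] at hy
    exact hmono (hs ⟨hy.1, by linarith [hy.2]⟩) hx₀ hy.2
  · have hsub : Icc x₀ (x₀ + r) ⊆ s := (Icc_subset_Icc (by linarith) le_rfl).trans hs
    refine ⟨r, abs_of_nonneg hr, ?_, fun y hy => ?_⟩
    · rwa [uIcc_of_le (by linarith)]
    rw [uIcc_of_le (by linarith)] at hy
    exact hanti hx₀ (hsub hy) hy.1

theorem nonpos_of_forall_mul_le_mul_rpow {p B K R : ℝ} (hK : 1 < K) (hR : 0 < R)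
    (h : ∀ r ∈ Ioo 0 R, p * r ≤ B * r ^ K) : p ≤ 0 := by
  have hlim : Tendsto (fun r : ℝ => B * r ^ (K - 1)) (𝓝[>] 0) (𝓝 0) := by
    have := ((Real.continuousAt_rpow_const 0 (K - 1) (Or.inr (by linarith))).const_mul B).tendsto
    simpa [Real.zero_rpow (by linarith : K - 1 ≠ 0)] using this.mono_left nhdsWithin_le_nhds
  refine ge_of_tendsto hlim ?_
  filter_upwards [Ioo_mem_nhdsGT hR] with r hr
  have hrK : r ^ K = r ^ (K - 1) * r := by
    rw [← Real.rpow_add_one hr.1.ne', sub_add_cancel]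
  exact le_of_mul_le_mul_right (by rw [mul_assoc, ← hrK]; exact h r hr) hr.1

theorem rpow_le_mul_rpow_mul_of_forall_mul_le {p f M C K R : ℝ} (hp : 0 ≤ p) (hf : 0 ≤ f)
    (hC : 1 ≤ C) (hK : 1 < K) (hR : 0 < R) (hpM : p ≤ M * R ^ (K - 1))
    (h : ∀ r ∈ Ioc 0 R, p * r ≤ C * (f + M * r ^ K)) :
    p ^ K ≤ (2 * C) ^ K * f ^ (K - 1) * M := by
  have hM₀ : 0 ≤ M := nonneg_of_mul_nonneg_left (hp.trans hpM) (by positivity)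
  by_cases hsmall : M * R ^ K ≤ f
  · -- `r = R`, and `p ≤ M R ^ (K - 1)` trades one factor `p` for `M`
    have hpR : p * R ≤ 2 * C * f := (h R ⟨hR, le_rfl⟩).trans (by nlinarith)
    calc p ^ K = p ^ (K - 1) * p := by rw [← Real.rpow_add_one' hp (by linarith), sub_add_cancel]
      _ ≤ p ^ (K - 1) * (M * R ^ (K - 1)) := by gcongr
      _ = (p * R) ^ (K - 1) * M := by rw [Real.mul_rpow hp hR.le]; ring
      _ ≤ (2 * C * f) ^ (K - 1) * M := by gcongr
      _ = (2 * C) ^ (K - 1) * f ^ (K - 1) * M := by rw [Real.mul_rpow (by linarith) hf]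
      _ ≤ (2 * C) ^ K * f ^ (K - 1) * M := by gcongr <;> linarith
  push Not at hsmall
  have hM : 0 < M := hM₀.lt_of_ne fun h => by rw [← h, zero_mul] at hsmall; linarith
  rcases hf.eq_or_lt with rfl | hf₀
  · have hp₀ : p ≤ 0 := nonpos_of_forall_mul_le_mul_rpow hK hR (B := C * M) fun r hr => by
      simpa [mul_assoc] using h r (Ioo_subset_Ioc_self hr)
    rw [le_antisymm hp₀ hp, Real.zero_rpow (by linarith)]
    positivity
  set r := (f / M) ^ K⁻¹
  have hrK : r ^ K = f / M := Real.rpow_inv_rpow (by positivity) (by linarith)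
  have hr : 0 < r := by positivity
  have hrR : r < R := by
    rw [← Real.rpow_lt_rpow_iff hr.le hR.le (by linarith : 0 < K), hrK, div_lt_iff₀ hM, mul_comm]
    exact hsmall
  have hpr : p * r ≤ 2 * C * f := (h r ⟨hr, hrR.le⟩).trans_eq (by
    rw [hrK, mul_div_cancel₀ _ hM.ne']; ring)
  have hprK := Real.rpow_le_rpow (by positivity) hpr (by linarith : 0 ≤ K)
  rw [Real.mul_rpow hp hr.le, hrK, Real.mul_rpow (by positivity) hf] at hprK
  have hfK : f ^ K = f ^ (K - 1) * f := by rw [← Real.rpow_add_one hf₀.ne', sub_add_cancel]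
  calc p ^ K = p ^ K * (f / M) * (M / f) := by field_simp
    _ ≤ (2 * C) ^ K * f ^ K * (M / f) := by gcongr
    _ = (2 * C) ^ K * f ^ (K - 1) * M := by rw [hfK]; field_simp

theorem rpow_le_mul_rpow_mul_max_of_forall_mul_le {p f H C K R : ℝ} (hp : 0 ≤ p) (hf : 0 ≤ f)
    (hC : 1 ≤ C) (hK : 1 < K) (hR : 0 < R) (h : ∀ r ∈ Ioo 0 R, p * r ≤ C * (f + H * r ^ K)) :
    p ^ K ≤ (2 * C) ^ K * f ^ (K - 1) * max H (p / R ^ (K - 1)) := by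
  refine rpow_le_mul_rpow_mul_of_forall_mul_le hp hf hC hK hR
    ((div_le_iff₀ (by positivity)).1 (le_max_right _ _)) fun r hr => ?_
  have hclosed : IsClosed {r : ℝ | p * r ≤ C * (f + H * r ^ K)} :=
    isClosed_le (by fun_prop) (by fun_prop (disch := linarith))
  have hr' : p * r ≤ C * (f + H * r ^ K) :=
    hclosed.closure_subset_iff.2 h (closure_Ioo hR.ne ▸ Ioc_subset_Icc_self hr)
  exact hr'.trans (mul_le_mul_of_nonneg_left (add_le_add_right (mul_le_mul_of_nonneg_right
    (le_max_left _ _) (Real.rpow_nonneg hr.1.le K)) f) (by linarith))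

/-- **Higher order Glaeser inequality in an interval.**
Let `v ∈ C^k((x₀-d, x₀+d))` with `v` and `v'` of constant sign on `(x₀-d, x₀+d)` and
`v^(k)` `α`-Hölder continuous there with constant `H`. Then, for a constant `C(k)`
depending only on `k`,
`|v'(x₀)|^(k+α) ≤ C(k) · |v(x₀)|^(k+α-1) · max { H, |v'(x₀)| / d^(k+α-1) }`. -/
theorem higher_order_glaeser_in_interval (k : ℕ) (hk : 0 < k) :
    ∃ C : ℝ, ∀ α : ℝ, α ∈ Set.Ioc (0 : ℝ) 1 → ∀ x₀ d : ℝ, 0 < d →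
      ∀ v : ℝ → ℝ,
      ContDiffOn ℝ (k : ℕ∞) v (Ioo (x₀ - d) (x₀ + d)) →
      ((∀ x ∈ Ioo (x₀ - d) (x₀ + d), 0 ≤ v x) ∨
        (∀ x ∈ Ioo (x₀ - d) (x₀ + d), v x ≤ 0)) →
      ((∀ x ∈ Ioo (x₀ - d) (x₀ + d), 0 ≤ derivWithin v (Ioo (x₀ - d) (x₀ + d)) x) ∨
        (∀ x ∈ Ioo (x₀ - d) (x₀ + d), derivWithin v (Ioo (x₀ - d) (x₀ + d)) x ≤ 0)) →
      ∀ H : ℝ, 0 ≤ H →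
      (∀ x ∈ Ioo (x₀ - d) (x₀ + d), ∀ y ∈ Ioo (x₀ - d) (x₀ + d),
        |iteratedDerivWithin k v (Ioo (x₀ - d) (x₀ + d)) y -
          iteratedDerivWithin k v (Ioo (x₀ - d) (x₀ + d)) x| ≤ H * |y - x| ^ α) →
      |derivWithin v (Ioo (x₀ - d) (x₀ + d)) x₀| ^ ((k : ℝ) + α) ≤
        C * |v x₀| ^ ((k : ℝ) + α - 1) *
          max H (|derivWithin v (Ioo (x₀ - d) (x₀ + d)) x₀| / d ^ ((k : ℝ) + α - 1)) := by
  obtain ⟨n, rfl⟩ : ∃ n, k = n + 1 := ⟨k - 1, by omega⟩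
  set C := markovConst (n + 1)
  refine ⟨(2 * C) ^ (n + 2), fun α hα x₀ d hd v hv hsgn hsgn' H hH hHolder => ?_⟩
  set U := Ioo (x₀ - d) (x₀ + d)
  have hv' : ContDiffOn ℝ (n + 1) v U := by exact_mod_cast hv
  have hx₀ : x₀ ∈ U := ⟨by linarith, by linarith⟩
  have habs : MonotoneOn (|v ·|) U ∨ AntitoneOn (|v ·|) U :=
    monotoneOn_abs_or_antitoneOn_abs hsgn <| monotoneOn_or_antitoneOn_of_derivWithin isOpen_Ioo
      (convex_Ioo _ _) (hv'.differentiableOn (by simp)) hsgn'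
  have hkey : ∀ r ∈ Ioo 0 d,
      |derivWithin v U x₀| * r ≤ C * (|v x₀| + H * r ^ (((n + 1 : ℕ) : ℝ) + α)) := by
    intro r hr
    obtain ⟨c, rfl, hcU, hside⟩ := exists_abs_eq_forall_mem_uIcc_abs_le habs hr.1.le
      (Icc_subset_Ioo (by linarith [hr.2] : x₀ - d < x₀ - r) (by linarith [hr.2]))
    rw [mul_comm]
    exact abs_mul_abs_derivWithin_le_markovConst_mul isOpen_Ioo hv' hH hα.1.le hcU
      (fun y hy => hHolder x₀ hx₀ y (hcU hy)) hside
  calc _ ≤ (2 * C) ^ (((n + 1 : ℕ) : ℝ) + α) * |v x₀| ^ (((n + 1 : ℕ) : ℝ) + α - 1) *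
        max H (|derivWithin v U x₀| / d ^ (((n + 1 : ℕ) : ℝ) + α - 1)) :=
      rpow_le_mul_rpow_mul_max_of_forall_mul_le (abs_nonneg _) (abs_nonneg _)
        (one_le_markovConst _) (by push_cast; linarith [hα.1]) hd hkey
    _ ≤ _ := by
      gcongr
      rw [← Real.rpow_natCast]
      exact Real.rpow_le_rpow_of_exponent_le (by linarith [one_le_markovConst (n + 1)])
        (by push_cast; linarith [hα.2])
end

section
/- Let k be a positive integer, α ∈ (0,1], (a,b) ⊆ ℝ a bounded interval, f : (a,b) → ℝ continuous, and g ∈ C^{k,α}((a,b)). Assume |f(x)|^{k+α} = |g(x)| for every x ∈ (a,b) and g(x)·g'(x) ≠ 0 for every x ∈ (a,b). Set H = Höld_α(g^{(k)}, (a,b)) and let p be defined by 1/p + 1/(k+α) = 1. Then there exists a constant C₂(k), depending only on k, such that ‖f'‖_{p,w,(a,b)} ≤ C₂(k) · max{ H^{1/(k+α)} · (b-a)^{1/p}, ‖g'‖_{L^∞((a,b))}^{1/(k+α)} }. -/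
/-!
Write `β = k + α`. Differentiating `|f|^β = |g|` where `g ≠ 0` gives the pointwise identity
`|f'| · |f|^(β-1) = |g'| / β ≤ G`; in particular `f'` never vanishes, so `f` is injective.
Where `|f'| > M` this forces `|f| ≤ (G/M)^(p-1)`, since `(β-1)(p-1) = 1`. By the change of
variables formula the set `E_M = {|f'| > M}` therefore satisfies
`M · |E_M| ≤ |f(E_M)| ≤ 2 (G/M)^(p-1)`, i.e. `|E_M| ≤ 2 G^(p-1) / M^p`, which is the
weak-`L^p` bound `2 G^(1/β)`.
-/

open MeasureTheory Set
open scoped ENNReal NNReal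

/-- The weak `L^p` quasinorm of `ψ` over `Ω ⊆ ℝ`:
`sup_{M ≥ 0} M · (meas {x ∈ Ω : |ψ(x)| > M})^(1/p)`. -/
noncomputable def weakLpNorm (p : ℝ) (Ω : Set ℝ) (ψ : ℝ → ℝ) : ℝ≥0∞ :=
  ⨆ M : ℝ≥0, (M : ℝ≥0∞) * (volume {x | x ∈ Ω ∧ (M : ℝ) < |ψ x|}) ^ (1 / p)

open Filter Topology

theorem ofReal_mul_volume_le_volume_image {s : Set ℝ} {f f' : ℝ → ℝ} {M : ℝ}
    (hs : MeasurableSet s) (hf : ∀ x ∈ s, HasDerivWithinAt f (f' x) s x) (hinj : InjOn f s)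
    (hM : ∀ x ∈ s, M ≤ |f' x|) :
    ENNReal.ofReal M * volume s ≤ volume (f '' s) := by
  have := lintegral_image_eq_lintegral_abs_deriv_mul hs hf hinj 1
  simp only [Pi.one_apply, mul_one, lintegral_one, Measure.restrict_apply_univ] at this
  rw [this, ← setLIntegral_const]
  exact setLIntegral_mono' hs fun x hx => ENNReal.ofReal_le_ofReal (hM x hx)

theorem volume_setOf_lt_abs_deriv_le {s : Set ℝ} {f : ℝ → ℝ} {M R : ℝ}
    (hs : MeasurableSet s) (hinj : InjOn f s) (hM : 0 < M)
    (hR : ∀ x ∈ s, M < |deriv f x| → |f x| ≤ R) :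
    volume {x | x ∈ s ∧ M < |deriv f x|} ≤ ENNReal.ofReal (2 * R / M) := by
  set E := {x | x ∈ s ∧ M < |deriv f x|}
  have hE : MeasurableSet E :=
    hs.inter (measurableSet_lt measurable_const (measurable_deriv f).abs)
  have hderiv : ∀ x ∈ E, HasDerivWithinAt f (deriv f x) E x := fun x hx =>
    (differentiableAt_of_deriv_ne_zero
      (abs_pos.1 (hM.trans hx.2))).hasDerivAt.hasDerivWithinAt
  have himage : f '' E ⊆ Icc (-R) R := by
    rintro _ ⟨x, hx, rfl⟩
    exact abs_le.1 (hR x hx.1 hx.2)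
  have := (ofReal_mul_volume_le_volume_image hE hderiv (hinj.mono fun x hx => hx.1)
      fun x hx => hx.2.le).trans ((measure_mono himage).trans_eq Real.volume_Icc)
  rwa [ENNReal.ofReal_div_of_pos hM, ENNReal.le_div_iff_mul_le (by simp [hM]) (by simp),
    mul_comm, ← show R - -R = 2 * R by ring]

theorem weakLpNorm_le_of_volume_le {p C : ℝ} {Ω : Set ℝ} {ψ : ℝ → ℝ} (hp : 0 < p)
    (hC : 0 ≤ C)
    (h : ∀ M : ℝ, 0 < M → volume {x | x ∈ Ω ∧ M < |ψ x|} ≤ ENNReal.ofReal (C / M ^ p)) :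
    weakLpNorm p Ω ψ ≤ ENNReal.ofReal (C ^ (1 / p)) := by
  refine iSup_le fun M => ?_
  rcases eq_or_ne M 0 with rfl | hM
  · simp
  have hM : (0 : ℝ) < M := NNReal.coe_pos.2 (pos_iff_ne_zero.2 hM)
  calc (M : ℝ≥0∞) * volume {x | x ∈ Ω ∧ (M : ℝ) < |ψ x|} ^ (1 / p)
      ≤ ENNReal.ofReal M * ENNReal.ofReal (C / M ^ p) ^ (1 / p) := by
        rw [ENNReal.ofReal_coe_nnreal]; gcongr; exact h M hM
    _ = ENNReal.ofReal (C ^ (1 / p)) := by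
        rw [ENNReal.ofReal_rpow_of_nonneg (by positivity) (by positivity),
          ← ENNReal.ofReal_mul hM.le, Real.div_rpow hC (by positivity), ← Real.rpow_mul hM.le,
          mul_one_div_cancel hp.ne', Real.rpow_one, mul_div_cancel₀ _ hM.ne']

theorem weakLpNorm_deriv_le_of_abs_deriv_mul_rpow_le {s : Set ℝ} {f : ℝ → ℝ} {β p K : ℝ}
    (hs : MeasurableSet s) (hinj : InjOn f s) (hβ : 1 < β) (hp : 1 / p + 1 / β = 1)
    (hK : 0 ≤ K) (hbound : ∀ x ∈ s, |deriv f x| * |f x| ^ (β - 1) ≤ K) :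
    weakLpNorm p s (deriv f) ≤ ENNReal.ofReal (2 * K ^ (1 / β)) := by
  have hβinv : 0 < 1 / β ∧ 1 / β < 1 := ⟨by positivity, (div_lt_one (by linarith)).2 hβ⟩
  have hp1 : 1 < p := by
    simpa using one_lt_one_div (a := 1 / p) (by linarith) (by linarith)
  have hconj : (β - 1) * (p - 1) = 1 := by field_simp at hp; nlinarith
  have hlevel (M : ℝ) (hM : 0 < M) (x : ℝ) (hx : x ∈ s) (hMx : M < |deriv f x|) :
      |f x| ≤ (K / M) ^ (p - 1) := by
    have : |f x| ^ (β - 1) ≤ K / M := by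
      rw [le_div_iff₀' hM]
      exact (mul_le_mul_of_nonneg_right hMx.le (by positivity)).trans (hbound x hx)
    calc |f x| = (|f x| ^ (β - 1)) ^ (p - 1) := by
          rw [← Real.rpow_mul (abs_nonneg _), hconj, Real.rpow_one]
      _ ≤ (K / M) ^ (p - 1) := by gcongr
  calc weakLpNorm p s (deriv f) ≤ ENNReal.ofReal ((2 * K ^ (p - 1)) ^ (1 / p)) := by
        refine weakLpNorm_le_of_volume_le (by linarith) (by positivity) fun M hM => ?_
        refine (volume_setOf_lt_abs_deriv_le hs hinj hM (hlevel M hM)).trans_eq ?_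
        rw [Real.div_rpow hK hM.le, Real.rpow_sub_one hM.ne']
        congr 1
        field_simp
    _ ≤ ENNReal.ofReal (2 * K ^ (1 / β)) := by
        gcongr
        rw [Real.mul_rpow zero_le_two (by positivity), ← Real.rpow_mul hK,
          show (p - 1) * (1 / p) = 1 / β by field_simp at hp ⊢; linarith]
        gcongr
        exact Real.rpow_le_self_of_one_le one_le_two (by linarith)

theorem injOn_of_deriv_ne_zero {s : Set ℝ} {f : ℝ → ℝ} (hs : Convex ℝ s)
    (hf : ∀ x ∈ s, deriv f x ≠ 0) : InjOn f s := by
  have hderiv : ∀ x ∈ s, HasDerivWithinAt f (deriv f x) s x := fun x hx =>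
    (differentiableAt_of_deriv_ne_zero (hf x hx)).hasDerivAt.hasDerivWithinAt
  have hcont : ContinuousOn f s := fun x hx => (hderiv x hx).continuousWithinAt
  rcases hasDerivWithinAt_forall_lt_or_forall_gt_of_forall_ne hs hderiv hf with hneg | hpos
  · exact (strictAntiOn_of_deriv_neg hs hcont fun x hx => hneg x (interior_subset hx)).injOn
  · exact (strictMonoOn_of_deriv_pos hs hcont fun x hx => hpos x (interior_subset hx)).injOn

theorem abs_deriv_eq_of_abs_eventuallyEq {f φ : ℝ → ℝ} {x : ℝ} (hf : ContinuousAt f x)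
    (hfx : f x ≠ 0) (h : ∀ᶠ y in 𝓝 x, |f y| = φ y) : |deriv f x| = |deriv φ x| := by
  rcases hfx.lt_or_gt with hneg | hpos
  · have : f =ᶠ[𝓝 x] fun y => -φ y :=
      ((hf.eventually (gt_mem_nhds hneg)).and h).mono fun y ⟨hy, hy'⟩ => by
        simp [← hy', abs_of_neg hy]
    rw [this.deriv_eq, deriv.fun_neg, abs_neg]
  · have : f =ᶠ[𝓝 x] φ :=
      ((hf.eventually (lt_mem_nhds hpos)).and h).mono fun y ⟨hy, hy'⟩ => by
        simp [← hy', abs_of_pos hy]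
    rw [this.deriv_eq]

theorem abs_deriv_mul_rpow_eq_of_abs_rpow_eq_abs {f g : ℝ → ℝ} {g' β x : ℝ} (hβ : 0 < β)
    (hf : ContinuousAt f x) (hg : HasDerivAt g g' x) (hgx : g x ≠ 0)
    (hfg : ∀ᶠ y in 𝓝 x, |f y| ^ β = |g y|) :
    |deriv f x| * |f x| ^ (β - 1) = |g'| / β := by
  have habs : ∀ᶠ y in 𝓝 x, |f y| = |g y| ^ β⁻¹ := hfg.mono fun y hy => by
    rw [← hy, Real.rpow_rpow_inv (abs_nonneg _) hβ.ne']
  have hfx : f x ≠ 0 := by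
    intro h0
    have := hfg.self_of_nhds
    rw [h0, abs_zero, Real.zero_rpow hβ.ne'] at this
    exact hgx (abs_eq_zero.1 this.symm)
  have hroot : HasDerivAt (fun y => |g y| ^ β⁻¹)
      (SignType.sign (g x) * g' * β⁻¹ * |g x| ^ (β⁻¹ - 1)) x :=
    ((hasDerivAt_abs hgx).comp x hg).rpow_const (Or.inl (abs_ne_zero.2 hgx))
  have hsign : |(SignType.sign (g x) : ℝ)| = 1 := by rcases hgx.lt_or_gt with h | h <;> simp [h]
  rw [abs_deriv_eq_of_abs_eventuallyEq hf hfx habs, hroot.deriv, habs.self_of_nhds,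
    abs_mul, abs_mul, abs_mul, hsign, abs_of_pos (inv_pos.2 hβ),
    abs_of_nonneg (Real.rpow_nonneg (abs_nonneg (g x)) _), one_mul, mul_assoc,
    ← Real.rpow_mul (abs_nonneg _), ← Real.rpow_add (abs_pos.2 hgx)]
  field_simp
  simp

theorem ContDiffOn.hasDerivAt_derivWithin {g : ℝ → ℝ} {s : Set ℝ} {n : WithTop ℕ∞}
    (hg : ContDiffOn ℝ n g s) (hn : n ≠ 0) (hs : IsOpen s) {x : ℝ} (hx : x ∈ s) :
    HasDerivAt g (derivWithin g s x) x := by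
  rw [derivWithin_of_isOpen hs hx]
  exact ((hg.differentiableOn hn) x hx).differentiableAt (hs.mem_nhds hx) |>.hasDerivAt

/-- **Weak `L^p` estimate on the derivative of the root (Proposition, part 2).**
Let `f` be continuous on `(a,b)` and `g ∈ C^{k,α}((a,b))` with `|f|^(k+α) = |g|` and
`g·g' ≠ 0` on `(a,b)`; let `H` be an `α`-Hölder constant for `g^(k)`, `G` a bound for
`|g'|` on `(a,b)`, and `1/p + 1/(k+α) = 1`. Then, for a constant `C₂(k)` depending
only on `k`,
`‖f'‖_{p,w,(a,b)} ≤ C₂(k) · max { H^(1/(k+α)) · (b-a)^(1/p), G^(1/(k+α)) }`. -/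
theorem weak_lp_estimate_root_derivative (k : ℕ) (hk : 0 < k) :
    ∃ C₂ : ℝ, ∀ α : ℝ, α ∈ Set.Ioc (0 : ℝ) 1 → ∀ a b : ℝ, a < b →
      ∀ f g : ℝ → ℝ,
      ContinuousOn f (Ioo a b) →
      ContDiffOn ℝ (k : ℕ∞) g (Ioo a b) →
      (∀ i : ℕ, i ≤ k → ∃ B : ℝ, ∀ x ∈ Ioo a b,
        |iteratedDerivWithin i g (Ioo a b) x| ≤ B) →
      ∀ H : ℝ, 0 ≤ H →
      (∀ x ∈ Ioo a b, ∀ y ∈ Ioo a b,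
        |iteratedDerivWithin k g (Ioo a b) y - iteratedDerivWithin k g (Ioo a b) x|
          ≤ H * |y - x| ^ α) →
      ∀ G : ℝ, 0 ≤ G →
      (∀ x ∈ Ioo a b, |derivWithin g (Ioo a b) x| ≤ G) →
      (∀ x ∈ Ioo a b, |f x| ^ ((k : ℝ) + α) = |g x|) →
      (∀ x ∈ Ioo a b, g x * derivWithin g (Ioo a b) x ≠ 0) →
      ∀ p : ℝ, 1 / p + 1 / ((k : ℝ) + α) = 1 →
      weakLpNorm p (Ioo a b) (deriv f) ≤
        ENNReal.ofReal (C₂ * max (H ^ (1 / ((k : ℝ) + α)) * (b - a) ^ (1 / p))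
          (G ^ (1 / ((k : ℝ) + α)))) := by
  refine ⟨2, fun α ⟨hα, _⟩ a b _ f g hf hg _ H _ _ G hG hg'G hfg hgg' p hp => ?_⟩
  have hβ : 1 < (k : ℝ) + α := by
    have : (1 : ℝ) ≤ k := by exact_mod_cast hk
    linarith
  have hg' (x : ℝ) (hx : x ∈ Ioo a b) : HasDerivAt g (derivWithin g (Ioo a b) x) x :=
    hg.hasDerivAt_derivWithin (by exact_mod_cast hk.ne') isOpen_Ioo hx
  have hroot (x : ℝ) (hx : x ∈ Ioo a b) :
      |deriv f x| * |f x| ^ ((k : ℝ) + α - 1) = |derivWithin g (Ioo a b) x| / ((k : ℝ) + α) :=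
    abs_deriv_mul_rpow_eq_of_abs_rpow_eq_abs (by linarith)
      (hf.continuousAt (isOpen_Ioo.mem_nhds hx)) (hg' x hx) (left_ne_zero_of_mul (hgg' x hx))
      (eventually_of_mem (isOpen_Ioo.mem_nhds hx) hfg)
  have hinj : InjOn f (Ioo a b) := injOn_of_deriv_ne_zero (convex_Ioo a b) fun x hx h0 => by
    have := hroot x hx
    rw [h0, abs_zero, zero_mul, eq_comm, div_eq_zero_iff] at this
    exact right_ne_zero_of_mul (hgg' x hx) (abs_eq_zero.1 (this.resolve_right (by linarith)))
  calc weakLpNorm p (Ioo a b) (deriv f) ≤ ENNReal.ofReal (2 * G ^ (1 / ((k : ℝ) + α))) :=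
        weakLpNorm_deriv_le_of_abs_deriv_mul_rpow_le measurableSet_Ioo hinj hβ hp hG fun x hx =>
          (hroot x hx).trans_le <| (div_le_self (abs_nonneg _) hβ.le).trans (hg'G x hx)
    _ ≤ _ := ENNReal.ofReal_le_ofReal (by gcongr; exact le_max_right _ _)
end

section
/- Let (a,b) ⊆ ℝ be a bounded interval, let f : (a,b) → ℝ be continuous, and let Ω₀ := {x ∈ (a,b) : f(x) ≠ 0}. Assume f is continuously differentiable on Ω₀ and that f' (defined on Ω₀) belongs to L^p_w(Ω₀) for some p > 1. Then the distributional derivative of f on (a,b) is a measurable function f' belonging to L^p_w((a,b)) which vanishes outside Ω₀, and ‖f'‖_{p,w,(a,b)} = ‖f'‖_{p,w,Ω₀}. -/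
open MeasureTheory Set
open scoped ENNReal NNReal

open Filter Topology in
private lemma no_min_of_isOpen' {C : Set ℝ} (hC : IsOpen C) {m : ℝ} (hm : m ∈ C)
    (hlb : ∀ y ∈ C, m ≤ y) : False := by
  rcases Metric.isOpen_iff.1 hC m hm with ⟨ε, hε, hball⟩
  have : m - ε / 2 ∈ C := by
    apply hball
    simp only [Metric.mem_ball, Real.dist_eq]
    rw [abs_of_nonpos (by linarith)]
    linarith
  linarith [hlb _ this]

open Filter Topology in
private lemma no_max_of_isOpen' {C : Set ℝ} (hC : IsOpen C) {m : ℝ} (hm : m ∈ C)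
    (hub : ∀ y ∈ C, y ≤ m) : False := by
  rcases Metric.isOpen_iff.1 hC m hm with ⟨ε, hε, hball⟩
  have : m + ε / 2 ∈ C := by
    apply hball
    simp only [Metric.mem_ball, Real.dist_eq]
    rw [abs_of_nonneg (by linarith)]
    linarith
  linarith [hub _ this]

open Filter Topology in
/-- FTC on an open preconnected subset of ℝ with vanishing boundary data. -/
private lemma setIntegral_deriv_eq_zero' {g G : ℝ → ℝ} (hgc : Continuous g)
    (hGint : Integrable G)
    {C : Set ℝ} (hCo : IsOpen C) (hCp : IsPreconnected C)
    (hderiv : ∀ x ∈ C, HasDerivAt g (G x) x)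
    (hfr : ∀ x ∈ frontier C, g x = 0)
    (htop : Tendsto g atTop (𝓝 0)) (hbot : Tendsto g atBot (𝓝 0)) :
    ∫ x in C, G x = 0 := by
  rcases eq_empty_or_nonempty C with rfl | hne
  · simp
  have h := hCp.mem_intervals
  simp only [Set.mem_insert_iff, Set.mem_singleton_iff] at h
  set c := sInf C with hc
  set d := sSup C with hd
  rcases h with h|h|h|h|h|h|h|h|h|h
  · exact absurd (fun y hy => by rw [h] at hy; exact hy.1)
      (fun hlb => no_min_of_isOpen' hCo (by rw [h]; exact ⟨le_refl c, by
        rcases hne with ⟨z, hz⟩; rw [h] at hz; linarith [hz.1, hz.2]⟩) hlb)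
  · exact absurd (fun y hy => by rw [h] at hy; exact hy.1)
      (fun hlb => no_min_of_isOpen' hCo (by rw [h]; exact ⟨le_refl c, by
        rcases hne with ⟨z, hz⟩; rw [h] at hz; linarith [hz.1, hz.2]⟩) hlb)
  · exact absurd (fun y hy => by rw [h] at hy; exact hy.2)
      (fun hub => no_max_of_isOpen' hCo (by rw [h]; exact ⟨by
        rcases hne with ⟨z, hz⟩; rw [h] at hz; linarith [hz.1, hz.2], le_refl d⟩) hub)
  · -- Ioo
    have hcd : c < d := by
      rcases hne with ⟨z, hz⟩; rw [h] at hz; linarith [hz.1, hz.2]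
    have hfr' : frontier C = {c, d} := by rw [h]; exact frontier_Ioo hcd
    have hgc0 : g c = 0 := hfr c (by rw [hfr']; left; rfl)
    have hgd0 : g d = 0 := hfr d (by rw [hfr']; right; rfl)
    have key : ∫ y in c..d, G y = g d - g c :=
      intervalIntegral.integral_eq_sub_of_hasDerivAt_of_le hcd.le
        hgc.continuousOn (fun x hx => hderiv x (h ▸ hx)) hGint.intervalIntegrable
    rw [intervalIntegral.integral_of_le hcd.le] at key
    rw [h, ← MeasureTheory.setIntegral_congr_set Ioo_ae_eq_Ioc] at *
    rw [key, hgc0, hgd0, sub_zero]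
  · exact absurd (fun y hy => by rw [h] at hy; exact hy)
      (fun hlb => no_min_of_isOpen' hCo (by rw [h]; exact le_refl c) hlb)
  · -- Ioi
    have hfr' : frontier C = {c} := by rw [h]; exact frontier_Ioi
    have hgc0 : g c = 0 := hfr c (by rw [hfr']; rfl)
    have key : ∫ y in Ioi c, G y = 0 - g c :=
      integral_Ioi_of_hasDerivAt_of_tendsto hgc.continuousWithinAt
        (fun x hx => hderiv x (h ▸ hx)) hGint.integrableOn htop
    rw [h, key, hgc0, sub_zero]
  · exact absurd (fun y hy => by rw [h] at hy; exact hy)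
      (fun hub => no_max_of_isOpen' hCo (by rw [h]; exact le_refl d) hub)
  · -- Iio
    have hfr' : frontier C = {d} := by rw [h]; exact frontier_Iio
    have hgd0 : g d = 0 := hfr d (by rw [hfr']; rfl)
    have key : ∫ y in Iic d, G y = g d - 0 :=
      integral_Iic_of_hasDerivAt_of_tendsto hgc.continuousWithinAt
        (fun x hx => hderiv x (h ▸ hx.out)) hGint.integrableOn hbot
    rw [h, MeasureTheory.setIntegral_congr_set Iio_ae_eq_Iic, key, hgd0, sub_zero]
  · -- univ
    rw [h, MeasureTheory.setIntegral_univ]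
    have := integral_of_hasDerivAt_of_tendsto (fun x => hderiv x (h ▸ mem_univ x))
      hGint hbot htop
    rw [this, sub_zero]
  · rw [h]; simp

private lemma frontier_connectedComponentIn_disjoint' {U : Set ℝ} (hU : IsOpen U) (q : ℝ) :
    ∀ x ∈ frontier (connectedComponentIn U q), x ∉ U := by
  intro x hx hxU
  set C := connectedComponentIn U q with hC
  have hCo : IsOpen C := hU.connectedComponentIn
  have hxc : x ∈ closure C := hx.1
  have hxnc : x ∉ C := by rw [← hCo.interior_eq]; exact hx.2
  have hV : IsOpen (connectedComponentIn U x) := hU.connectedComponentIn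
  have hVx : x ∈ connectedComponentIn U x := mem_connectedComponentIn hxU
  rcases mem_closure_iff.1 hxc _ hV hVx with ⟨z, hzV, hzC⟩
  have h1 : connectedComponentIn U x = connectedComponentIn U z := connectedComponentIn_eq hzV
  have h2 : C = connectedComponentIn U z := connectedComponentIn_eq hzC
  exact hxnc (h2 ▸ h1 ▸ hVx)

open Filter Topology in
/-- If `g` is continuous and vanishes at infinity and outside the open set `U`, has derivative `G`
on `U` with `G` integrable and vanishing outside `U`, then `∫ G = 0`. -/
private lemma integral_eq_zero_of_deriv_on_open' {g G : ℝ → ℝ} {U : Set ℝ} (hU : IsOpen U)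
    (hgc : Continuous g) (htop : Tendsto g atTop (𝓝 0)) (hbot : Tendsto g atBot (𝓝 0))
    (hGint : Integrable G) (hderiv : ∀ x ∈ U, HasDerivAt g (G x) x)
    (hg0 : ∀ x, x ∉ U → g x = 0) (hG0 : ∀ x, x ∉ U → G x = 0) :
    ∫ x, G x = 0 := by
  classical
  have hcomp : ∀ q ∈ U, ∫ x in connectedComponentIn U q, G x = 0 := by
    intro q hq
    exact setIntegral_deriv_eq_zero' hgc hGint hU.connectedComponentIn
      isPreconnected_connectedComponentIn
      (fun x hx => hderiv x (connectedComponentIn_subset U q hx))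
      (fun x hx => hg0 x (frontier_connectedComponentIn_disjoint' hU q x hx)) htop hbot
  set S : Set (Set ℝ) := (connectedComponentIn U) '' (U ∩ Set.range ((↑) : ℚ → ℝ)) with hSdef
  have hScnt : S.Countable :=
    ((Set.countable_range ((↑) : ℚ → ℝ)).mono inter_subset_right).image _
  have hUnion : ⋃₀ S = U := by
    apply subset_antisymm
    · exact sUnion_subset fun C hC => by
        rcases hC with ⟨q, hq, rfl⟩; exact connectedComponentIn_subset U q
    · intro x hxU
      have hV : IsOpen (connectedComponentIn U x) := hU.connectedComponentIn
      have hVx : x ∈ connectedComponentIn U x := mem_connectedComponentIn hxU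
      rcases Metric.isOpen_iff.1 hV x hVx with ⟨ε, hε, hball⟩
      rcases exists_rat_btwn (show x - ε < x by linarith) with ⟨q, hq1, hq2⟩
      have hqV : (q : ℝ) ∈ connectedComponentIn U x := by
        apply hball; simp only [Metric.mem_ball, Real.dist_eq]
        rw [abs_of_nonpos (by linarith)]; linarith
      refine ⟨connectedComponentIn U q,
        ⟨q, ⟨connectedComponentIn_subset U x hqV, ⟨q, rfl⟩⟩, rfl⟩, ?_⟩
      rw [← connectedComponentIn_eq hqV]; exact hVx
  haveI : Countable ↥S := hScnt.to_subtype
  have hmeas : ∀ C : S, MeasurableSet (C : Set ℝ) := by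
    rintro ⟨C, ⟨q, hq, rfl⟩⟩; exact hU.connectedComponentIn.measurableSet
  have hdisj : Pairwise (Function.onFun Disjoint fun C : S => (C : Set ℝ)) := by
    rintro ⟨C₁, hC₁⟩ ⟨C₂, hC₂⟩ hne
    rcases hC₁ with ⟨q₁, hq₁, rfl⟩
    rcases hC₂ with ⟨q₂, hq₂, rfl⟩
    simp only [Function.onFun]
    rw [Set.disjoint_iff_inter_eq_empty]
    by_contra hcon
    rcases nonempty_iff_ne_empty.2 hcon with ⟨z, hz1, hz2⟩
    exact hne (Subtype.ext
      ((connectedComponentIn_eq hz1).trans (connectedComponentIn_eq hz2).symm))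
  have hUeq : U = ⋃ C : S, (C : Set ℝ) := by rw [← hUnion, sUnion_eq_iUnion]
  have h1 : ∫ x in U, G x = 0 := by
    rw [hUeq, integral_iUnion hmeas hdisj (hUeq ▸ hGint.integrableOn)]
    have : ∀ C : S, ∫ x in (C : Set ℝ), G x = 0 := by
      rintro ⟨C, ⟨q, hq, rfl⟩⟩; exact hcomp q hq.1
    simp [this]
  have h2 : ∫ x in Uᶜ, G x = 0 := by
    rw [setIntegral_congr_fun hU.measurableSet.compl (fun x hx => hG0 x hx)]
    simp
  have := integral_add_compl hU.measurableSet hGint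
  rw [h1, h2, zero_add] at this
  exact this.symm

private lemma integrable_of_weakLp' {p : ℝ} (hp : 1 < p) {Ω : Set ℝ}
    (hvol : volume Ω ≠ ⊤) {ψ : ℝ → ℝ} (hψm : Measurable ψ)
    (hψ0 : ∀ x, x ∉ Ω → ψ x = 0)
    (hfin : (⨆ M : ℝ≥0, (M : ℝ≥0∞) * (volume {x | x ∈ Ω ∧ (M : ℝ) < |ψ x|}) ^ (1 / p)) ≠ ⊤) :
    Integrable ψ := by
  set W := ⨆ M : ℝ≥0, (M : ℝ≥0∞) * (volume {x | x ∈ Ω ∧ (M : ℝ) < |ψ x|}) ^ (1 / p) with hW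
  have hppos : (0:ℝ) < p := by linarith
  have hsub : ∀ t : ℝ, 0 < t → {a : ℝ | t < |ψ a|} = {x | x ∈ Ω ∧ t < |ψ x|} := by
    intro t ht
    ext x
    simp only [mem_setOf_eq, iff_def]
    refine ⟨fun hx => ⟨?_, hx⟩, fun hx => hx.2⟩
    by_contra hxΩ
    rw [hψ0 x hxΩ] at hx
    simp at hx; linarith
  constructor
  · exact hψm.aestronglyMeasurable
  · rw [HasFiniteIntegral]
    have key : ∫⁻ a, ‖ψ a‖ₑ = ∫⁻ t in Ioi (0:ℝ), volume {a : ℝ | t < |ψ a|} := by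
      rw [← lintegral_eq_lintegral_meas_lt volume (ae_of_all _ fun x => abs_nonneg (ψ x))
        hψm.abs.aemeasurable]
      congr 1
      ext a
      rw [← Real.norm_eq_abs, ofReal_norm_eq_enorm]
    rw [key, ← Ioc_union_Ioi_eq_Ioi (zero_le_one : (0:ℝ) ≤ 1),
      lintegral_union measurableSet_Ioi (Ioc_disjoint_Ioi le_rfl)]
    have part1 : ∫⁻ t in Ioc (0:ℝ) 1, volume {a : ℝ | t < |ψ a|} < ⊤ := by
      calc ∫⁻ t in Ioc (0:ℝ) 1, volume {a : ℝ | t < |ψ a|}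
          ≤ ∫⁻ _ in Ioc (0:ℝ) 1, volume Ω := by
            apply setLIntegral_mono' measurableSet_Ioc
            intro t ht
            rw [hsub t ht.1]
            exact measure_mono (fun x hx => hx.1)
        _ = volume Ω * volume (Ioc (0:ℝ) 1) := setLIntegral_const _ _
        _ < ⊤ := ENNReal.mul_lt_top hvol.lt_top (by simp)
    have part2 : ∫⁻ t in Ioi (1:ℝ), volume {a : ℝ | t < |ψ a|} < ⊤ := by
      have hbound : ∀ t ∈ Ioi (1:ℝ), volume {a : ℝ | t < |ψ a|}
          ≤ W ^ p * ENNReal.ofReal (t ^ (-p)) := by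
        intro t ht
        have ht1 : (1:ℝ) < t := ht
        have ht0 : (0:ℝ) < t := by linarith
        set M : ℝ≥0 := t.toNNReal with hM
        have hMt : (M : ℝ) = t := Real.coe_toNNReal t ht0.le
        have hMne : (M : ℝ≥0∞) ≠ 0 := by
          simp only [ne_eq, ENNReal.coe_eq_zero]
          intro h
          rw [h] at hMt; simp at hMt; linarith
        have hub : (M : ℝ≥0∞) * (volume {x | x ∈ Ω ∧ (M : ℝ) < |ψ x|}) ^ (1 / p) ≤ W :=
          le_iSup (fun M : ℝ≥0 =>
            (M : ℝ≥0∞) * (volume {x | x ∈ Ω ∧ (M : ℝ) < |ψ x|}) ^ (1 / p)) M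
        set v := volume {x | x ∈ Ω ∧ (M : ℝ) < |ψ x|} with hv
        have hveq : volume {a : ℝ | t < |ψ a|} = v := by rw [hsub t ht0, hv, hMt]
        have h1 : v ^ (1/p) ≤ W / M := by
          rw [ENNReal.le_div_iff_mul_le (Or.inl hMne) (Or.inl ENNReal.coe_ne_top)]
          rw [mul_comm]; exact hub
        have h2 : v = (v ^ (1/p)) ^ p := by
          rw [← ENNReal.rpow_mul, one_div_mul_cancel (ne_of_gt hppos), ENNReal.rpow_one]
        have h3 : v ≤ (W / M) ^ p := by
          rw [h2]; exact ENNReal.rpow_le_rpow h1 hppos.le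
        have h4 : ((M : ℝ≥0∞)) ^ p = ENNReal.ofReal (t ^ p) := by
          rw [← ENNReal.ofReal_rpow_of_pos ht0, ← hMt, ENNReal.ofReal_coe_nnreal]
        have h5 : (W / M) ^ p = W ^ p * ENNReal.ofReal (t ^ (-p)) := by
          rw [ENNReal.div_rpow_of_nonneg _ _ hppos.le, h4, div_eq_mul_inv]
          congr 1
          rw [Real.rpow_neg ht0.le, ENNReal.ofReal_inv_of_pos (Real.rpow_pos_of_pos ht0 p)]
        rw [hveq]
        exact h3.trans_eq h5
      calc ∫⁻ t in Ioi (1:ℝ), volume {a : ℝ | t < |ψ a|}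
          ≤ ∫⁻ t in Ioi (1:ℝ), W ^ p * ENNReal.ofReal (t ^ (-p)) :=
            setLIntegral_mono' measurableSet_Ioi hbound
        _ = W ^ p * ∫⁻ t in Ioi (1:ℝ), ENNReal.ofReal (t ^ (-p)) :=
            lintegral_const_mul' _ _ (ENNReal.rpow_ne_top_of_nonneg hppos.le hfin)
        _ < ⊤ := by
            apply ENNReal.mul_lt_top (ENNReal.rpow_ne_top_of_nonneg hppos.le hfin).lt_top
            have hint : IntegrableOn (fun t : ℝ => t ^ (-p)) (Ioi (1:ℝ)) :=
              integrableOn_Ioi_rpow_of_lt (by linarith) one_pos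
            have := hint.2
            rw [HasFiniteIntegral] at this
            refine lt_of_le_of_lt (lintegral_mono fun t => ?_) this
            rw [← ofReal_norm_eq_enorm, Real.norm_eq_abs]
            exact ENNReal.ofReal_le_ofReal (le_abs_self _)
    exact ENNReal.add_lt_top.2 ⟨part1, part2⟩

open Filter Topology in
private lemma continuous_indicator_mul' {f k : ℝ → ℝ} {s K : Set ℝ} (hs : IsOpen s)
    (hf : ContinuousOn f s) (hk : Continuous k) (hK : IsClosed K) (hKs : K ⊆ s)
    (hk0 : ∀ x, x ∉ K → k x = 0) :
    Continuous (fun x => s.indicator f x * k x) := by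
  rw [continuous_iff_continuousAt]
  intro x
  by_cases hx : x ∈ s
  · have h1 : ContinuousAt (fun y => f y * k y) x :=
      (hf.continuousAt (hs.mem_nhds hx)).mul hk.continuousAt
    refine (continuousAt_congr ?_).1 h1
    filter_upwards [hs.mem_nhds hx] with y hy
    rw [indicator_of_mem hy]
  · have hxK : x ∉ K := fun h => hx (hKs h)
    have h0 : (fun y => s.indicator f y * k y) =ᶠ[𝓝 x] (fun _ => (0:ℝ)) := by
      filter_upwards [hK.isOpen_compl.mem_nhds hxK] with y hy
      rw [hk0 y hy, mul_zero]
    exact (continuousAt_congr h0).2 continuousAt_const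

open Filter Topology in
private lemma tendsto_zero_of_hcs' {g : ℝ → ℝ} (hg : HasCompactSupport g) :
    Tendsto g atTop (𝓝 0) ∧ Tendsto g atBot (𝓝 0) := by
  rw [hasCompactSupport_iff_eventuallyEq, Filter.coclosedCompact_eq_cocompact] at hg
  exact ⟨(hg.filter_mono atTop_le_cocompact).tendsto,
    (hg.filter_mono atBot_le_cocompact).tendsto⟩

open Filter Topology in
/-- **Distributional derivative from a weak `L^p` classical derivative.**
Let `f` be continuous on a bounded interval `(a,b)`, let
`Ω₀ := {x ∈ (a,b) : f(x) ≠ 0}`, and assume that `f` is continuously differentiable on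
`Ω₀` with `f' ∈ L^p_w(Ω₀)` for some `p > 1`. Then the distributional derivative of `f`
on `(a,b)` is a measurable function `ψ`, vanishing outside `Ω₀` and equal to `f'` on
`Ω₀`, belonging to `L^p_w((a,b))` with `‖ψ‖_{p,w,(a,b)} = ‖f'‖_{p,w,Ω₀}`. -/
theorem distributional_derivative_from_weak_lp (a b : ℝ) (hab : a < b) (f : ℝ → ℝ)
    (hf : ContinuousOn f (Ioo a b)) (p : ℝ) (hp : 1 < p)
    (hdiff : ∀ x ∈ {x | x ∈ Ioo a b ∧ f x ≠ 0}, DifferentiableAt ℝ f x)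
    (hderiv : ContinuousOn (deriv f) {x | x ∈ Ioo a b ∧ f x ≠ 0})
    (hfin : weakLpNorm p {x | x ∈ Ioo a b ∧ f x ≠ 0} (deriv f) ≠ ⊤) :
    ∃ ψ : ℝ → ℝ, Measurable ψ ∧
      (∀ x ∈ Ioo a b, f x = 0 → ψ x = 0) ∧
      (∀ x ∈ Ioo a b, f x ≠ 0 → ψ x = deriv f x) ∧
      (∀ φ : ℝ → ℝ, ContDiff ℝ (⊤ : ℕ∞) φ → HasCompactSupport φ → tsupport φ ⊆ Ioo a b →
        ∫ x in Ioo a b, f x * deriv φ x = - ∫ x in Ioo a b, ψ x * φ x) ∧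
      weakLpNorm p (Ioo a b) ψ ≠ ⊤ ∧
      weakLpNorm p (Ioo a b) ψ =
        weakLpNorm p {x | x ∈ Ioo a b ∧ f x ≠ 0} (deriv f) := by
  classical
  set Ω₀ : Set ℝ := {x | x ∈ Ioo a b ∧ f x ≠ 0} with hΩ₀def
  have hΩ₀open : IsOpen Ω₀ := by
    have heq : Ω₀ = Ioo a b ∩ f ⁻¹' ({0}ᶜ) := by
      ext x; simp [hΩ₀def, mem_preimage]
    rw [heq]
    exact hf.isOpen_inter_preimage isOpen_Ioo isOpen_compl_singleton
  have hΩ₀sub : Ω₀ ⊆ Ioo a b := fun x hx => hx.1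
  set ψ : ℝ → ℝ := Ω₀.indicator (deriv f) with hψdef
  have hψm : Measurable ψ := (measurable_deriv f).indicator hΩ₀open.measurableSet
  have hψ_eq : ∀ x ∈ Ω₀, ψ x = deriv f x := fun x hx => indicator_of_mem hx _
  have hψ0 : ∀ x, x ∉ Ω₀ → ψ x = 0 := fun x hx => indicator_of_notMem hx _
  have hψ0' : ∀ x, x ∉ Ioo a b → ψ x = 0 := fun x hx => hψ0 x (fun hc => hx (hΩ₀sub hc))
  have hsets : ∀ M : ℝ≥0,
      {x | x ∈ Ioo a b ∧ (M : ℝ) < |ψ x|} = {x | x ∈ Ω₀ ∧ (M : ℝ) < |deriv f x|} := by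
    intro M; ext x
    constructor
    · rintro ⟨hx, hM⟩
      have hxΩ : x ∈ Ω₀ := by
        by_contra hc
        rw [hψ0 x hc, abs_zero] at hM
        exact absurd hM (not_lt.2 M.coe_nonneg)
      exact ⟨hxΩ, by rwa [hψ_eq x hxΩ] at hM⟩
    · rintro ⟨hx, hM⟩
      exact ⟨hΩ₀sub hx, by rwa [hψ_eq x hx]⟩
  have hnormeq : weakLpNorm p (Ioo a b) ψ = weakLpNorm p Ω₀ (deriv f) := by
    unfold weakLpNorm
    exact iSup_congr fun M => by rw [hsets M]
  have hfin' : weakLpNorm p (Ioo a b) ψ ≠ ⊤ := by rw [hnormeq]; exact hfin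
  have hψint : Integrable ψ := by
    refine integrable_of_weakLp' hp ?_ hψm hψ0' ?_
    · rw [Real.volume_Ioo]; exact ENNReal.ofReal_ne_top
    · exact hfin'
  refine ⟨ψ, hψm, ?_, ?_, ?_, hfin', hnormeq⟩
  · intro x hx h0
    exact hψ0 x (fun hc => hc.2 h0)
  · intro x hx hne
    exact hψ_eq x ⟨hx, hne⟩
  · intro φ hφ hφc hφs
    have hKc : IsClosed (tsupport φ) := isClosed_tsupport φ
    have hφcont : Continuous φ := hφ.continuous
    have hφ'cont : Continuous (deriv φ) := hφ.continuous_deriv (by simp)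
    have hφ0 : ∀ x, x ∉ tsupport φ → φ x = 0 := fun x hx => image_eq_zero_of_notMem_tsupport hx
    have hdφ0 : ∀ x, x ∉ tsupport φ → deriv φ x = 0 := by
      intro x hx
      have h0 : φ =ᶠ[𝓝 x] (fun _ => (0:ℝ)) := by
        filter_upwards [hKc.isOpen_compl.mem_nhds hx] with y hy
        exact image_eq_zero_of_notMem_tsupport hy
      rw [h0.deriv_eq]
      exact deriv_const x 0
    set g : ℝ → ℝ := fun x => (Ioo a b).indicator f x * φ x with hgdef
    set h : ℝ → ℝ := fun x => (Ioo a b).indicator f x * deriv φ x with hhdef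
    set G : ℝ → ℝ := fun x => ψ x * φ x + h x with hGdef
    have hgc : Continuous g := continuous_indicator_mul' isOpen_Ioo hf hφcont hKc hφs hφ0
    have hhc : Continuous h := continuous_indicator_mul' isOpen_Ioo hf hφ'cont hKc hφs hdφ0
    have hgcs : HasCompactSupport g := by
      apply HasCompactSupport.intro hφc
      intro x hx
      simp only [hgdef]
      rw [hφ0 x hx, mul_zero]
    have hhcs : HasCompactSupport h := by
      apply HasCompactSupport.intro hφc
      intro x hx
      simp only [hhdef]
      rw [hdφ0 x hx, mul_zero]
    have hφbdd : ∃ C, ∀ x, ‖φ x‖ ≤ C := hφc.exists_bound_of_continuous hφcont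
    have hψφint : Integrable (fun x => ψ x * φ x) :=
      (hψint.bdd_mul hφcont.aestronglyMeasurable (ae_of_all _ hφbdd.choose_spec)).congr
        (Filter.Eventually.of_forall fun x => mul_comm (φ x) (ψ x))
    have hhint : Integrable h := hhc.integrable_of_hasCompactSupport hhcs
    have hGint : Integrable G := hψφint.add hhint
    set U : Set ℝ := Ω₀ ∪ (tsupport φ)ᶜ with hUdef
    have hUopen : IsOpen U := hΩ₀open.union hKc.isOpen_compl
    have hgtop := (tendsto_zero_of_hcs' hgcs).1
    have hgbot := (tendsto_zero_of_hcs' hgcs).2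
    have hderivU : ∀ x ∈ U, HasDerivAt g (G x) x := by
      intro x hx
      rcases hx with hx | hx
      · have hfd : HasDerivAt f (deriv f x) x := (hdiff x hx).hasDerivAt
        have hφd : HasDerivAt φ (deriv φ x) x := (hφ.differentiable (by simp) x).hasDerivAt
        have hmul := hfd.mul hφd
        have hgeq : g =ᶠ[𝓝 x] fun y => f y * φ y := by
          filter_upwards [isOpen_Ioo.mem_nhds hx.1] with y hy
          simp only [hgdef]
          rw [indicator_of_mem hy]
        have hder := hmul.congr_of_eventuallyEq hgeq
        refine hder.congr_deriv ?_
        simp only [hGdef, hhdef]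
        rw [hψ_eq x hx, indicator_of_mem hx.1]
      · have hgeq : g =ᶠ[𝓝 x] fun _ => (0:ℝ) := by
          filter_upwards [hKc.isOpen_compl.mem_nhds hx] with y hy
          simp only [hgdef]
          rw [hφ0 y hy, mul_zero]
        have hder : HasDerivAt g 0 x := (hasDerivAt_const x (0:ℝ)).congr_of_eventuallyEq hgeq
        refine hder.congr_deriv ?_
        simp only [hGdef, hhdef]
        rw [hφ0 x hx, hdφ0 x hx, mul_zero, mul_zero, add_zero]
    have hg0U : ∀ x, x ∉ U → g x = 0 := by
      intro x hx
      have hxK : x ∈ tsupport φ := by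
        by_contra hc; exact hx (Or.inr hc)
      have hxΩ : x ∉ Ω₀ := fun hc => hx (Or.inl hc)
      have hxab : x ∈ Ioo a b := hφs hxK
      have hfx : f x = 0 := by
        by_contra hc; exact hxΩ ⟨hxab, hc⟩
      simp only [hgdef]
      rw [indicator_of_mem hxab, hfx, zero_mul]
    have hG0U : ∀ x, x ∉ U → G x = 0 := by
      intro x hx
      have hxK : x ∈ tsupport φ := by
        by_contra hc; exact hx (Or.inr hc)
      have hxΩ : x ∉ Ω₀ := fun hc => hx (Or.inl hc)
      have hxab : x ∈ Ioo a b := hφs hxK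
      have hfx : f x = 0 := by
        by_contra hc; exact hxΩ ⟨hxab, hc⟩
      simp only [hGdef, hhdef]
      rw [hψ0 x hxΩ, indicator_of_mem hxab, hfx, zero_mul, zero_mul, add_zero]
    have hzero : ∫ x, G x = 0 :=
      integral_eq_zero_of_deriv_on_open' hUopen hgc hgtop hgbot hGint hderivU hg0U hG0U
    have hzero' : (∫ x, ψ x * φ x) + (∫ x, h x) = 0 := by
      rw [← integral_add hψφint hhint]
      exact hzero
    have e1 : ∫ x in Ioo a b, f x * deriv φ x = ∫ x, h x := by
      rw [← integral_indicator measurableSet_Ioo]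
      congr 1
      ext x
      by_cases hx : x ∈ Ioo a b
      · rw [indicator_of_mem hx]
        simp only [hhdef]
        rw [indicator_of_mem hx]
      · rw [indicator_of_notMem hx]
        simp only [hhdef]
        rw [indicator_of_notMem hx, zero_mul]
    have e2 : ∫ x in Ioo a b, ψ x * φ x = ∫ x, ψ x * φ x := by
      rw [← integral_indicator measurableSet_Ioo]
      congr 1
      ext x
      by_cases hx : x ∈ Ioo a b
      · rw [indicator_of_mem hx]
      · rw [indicator_of_notMem hx, hψ0' x hx, zero_mul]
    rw [e1, e2]
    linarith [hzero']
end

section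
/- Let k be a positive integer, α ∈ (0,1], and let p be defined by 1/p + 1/(k+α) = 1. Define f : (-1,1) → ℝ by f(x) := |x|^{1/(k+α)} and g : (-1,1) → ℝ by g(x) := x. Then f is continuous on (-1,1), g is smooth with |f(x)|^{k+α} = |g(x)| for all x ∈ (-1,1), f is differentiable on (-1,1)∖{0}, but f' does not belong to L^p((-1,1)), i.e. ∫_{-1}^{1} |f'(x)|^p dx = +∞. Hence the summability exponent p in the regularity theorem for roots cannot be attained. -/
open MeasureTheory Set
open scoped ENNReal

/-- **Optimality of the summability exponent.**
Let `p` be defined by `1/p + 1/(k+α) = 1`, and let `f(x) = |x|^(1/(k+α))`,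
`g(x) = x` on `(-1,1)`. Then `f` is continuous, `g` is smooth with
`|f|^(k+α) = |g|`, `f` is differentiable away from `0`, but
`∫_{-1}^{1} |f'(x)|^p dx = +∞`, i.e. `f' ∉ L^p((-1,1))`. -/
theorem summability_exponent_optimal (k : ℕ) (hk : 0 < k) (α : ℝ)
    (hα : α ∈ Set.Ioc (0 : ℝ) 1) (p : ℝ) (hp : 1 / p + 1 / ((k : ℝ) + α) = 1)
    (f g : ℝ → ℝ)
    (hfdef : ∀ x : ℝ, f x = |x| ^ (1 / ((k : ℝ) + α)))
    (hgdef : ∀ x : ℝ, g x = x) :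
    ContinuousOn f (Ioo (-1 : ℝ) 1) ∧
    ContDiff ℝ (⊤ : ℕ∞) g ∧
    (∀ x ∈ Ioo (-1 : ℝ) 1, |f x| ^ ((k : ℝ) + α) = |g x|) ∧
    (∀ x ∈ Ioo (-1 : ℝ) 1, x ≠ 0 → DifferentiableAt ℝ f x) ∧
    ∫⁻ x in Ioo (-1 : ℝ) 1, ENNReal.ofReal (|deriv f x| ^ p) = ⊤ := by
  obtain ⟨hα0, hα1⟩ := hα
  have hk1 : (1 : ℝ) ≤ (k : ℝ) := by exact_mod_cast hk
  set A : ℝ := (k : ℝ) + α with hA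
  have hA1 : 1 < A := by simp only [hA]; linarith
  have hA0 : 0 < A := by linarith
  set c : ℝ := 1 / A with hc
  have hc0 : 0 < c := by positivity
  have hip : 1 / p = 1 - 1 / A := by rw [← hc]; linarith
  have hp0 : 0 < p := by
    have h1 : 0 < 1 / p := by
      rw [hip]
      have : 1 / A < 1 := by rw [div_lt_one hA0]; linarith
      linarith
    exact one_div_pos.mp h1
  have hcm : (c - 1) * p = -1 := by
    have hc1 : c - 1 = -(1 / p) := by rw [hip]; ring
    rw [hc1]
    field_simp
  -- continuity
  have hfeq : f = fun x : ℝ => |x| ^ c := funext hfdef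
  have hcont : Continuous f := by
    rw [hfeq]
    exact continuous_iff_continuousAt.2 fun x =>
      (Real.continuousAt_rpow_const _ _ (Or.inr hc0.le)).comp continuous_abs.continuousAt
  refine ⟨hcont.continuousOn, ?_, ?_, ?_, ?_⟩
  · have : g = id := funext hgdef
    rw [this]; exact contDiff_id
  · intro x _
    rw [hfdef x, hgdef x, abs_of_nonneg (Real.rpow_nonneg (abs_nonneg x) c),
      ← Real.rpow_mul (abs_nonneg x)]
    have : c * A = 1 := by rw [hc]; field_simp
    rw [this, Real.rpow_one]
  · intro x _ hx
    rcases lt_or_gt_of_ne hx with hneg | hpos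
    · have hev : f =ᶠ[nhds x] fun y => (-y) ^ c := by
        filter_upwards [Iio_mem_nhds hneg] with y hy
        rw [hfdef y, abs_of_neg hy]
      rw [hev.differentiableAt_iff]
      exact (differentiable_neg x).rpow_const (Or.inl (by simpa using hneg.ne))
    · have hev : f =ᶠ[nhds x] fun y => y ^ c := by
        filter_upwards [Ioi_mem_nhds hpos] with y hy
        rw [hfdef y, abs_of_pos hy]
      rw [hev.differentiableAt_iff]
      exact differentiableAt_id.rpow_const (Or.inl hpos.ne')
  -- the lintegral is infinite
  · have hkey : ∀ x ∈ Ioo (0 : ℝ) 1,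
        ENNReal.ofReal (|deriv f x| ^ p)
          = ENNReal.ofReal (c ^ p) * ENNReal.ofReal x⁻¹ := by
      intro x hx
      have hx0 : 0 < x := hx.1
      have hd : deriv f x = c * x ^ (c - 1) := by
        have hev : f =ᶠ[nhds x] fun y => y ^ c := by
          filter_upwards [Ioi_mem_nhds hx0] with y hy
          rw [hfdef y, abs_of_pos hy]
        rw [hev.deriv_eq, Real.deriv_rpow_const]
      have habs : |deriv f x| ^ p = c ^ p * x⁻¹ := by
        rw [hd, abs_of_nonneg (by positivity),
          Real.mul_rpow hc0.le (Real.rpow_nonneg hx0.le _),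
          ← Real.rpow_mul hx0.le, hcm, Real.rpow_neg_one]
      rw [habs, ENNReal.ofReal_mul (by positivity)]
    have htop : ∫⁻ x in Ioo (0 : ℝ) 1, ENNReal.ofReal x⁻¹ = ⊤ := by
      by_contra h
      have hnonneg : 0 ≤ᵐ[volume.restrict (Ioo (0:ℝ) 1)] fun x : ℝ => x⁻¹ := by
        filter_upwards [self_mem_ae_restrict measurableSet_Ioo] with x hx
        exact (inv_pos.mpr hx.1).le
      have hint : IntegrableOn (fun x : ℝ => x⁻¹) (Ioo 0 1) := by
        refine ⟨measurable_inv.aestronglyMeasurable, ?_⟩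
        rw [hasFiniteIntegral_iff_ofReal hnonneg]
        exact lt_top_iff_ne_top.mpr h
      have hint' : IntegrableOn (fun x : ℝ => x ^ (-1 : ℝ)) (Ioo 0 1) := by
        simpa [funext Real.rpow_neg_one] using hint
      rw [intervalIntegral.integrableOn_Ioo_rpow_iff zero_lt_one] at hint'
      linarith
    have hle : ∫⁻ x in Ioo (0 : ℝ) 1, ENNReal.ofReal (|deriv f x| ^ p)
        ≤ ∫⁻ x in Ioo (-1 : ℝ) 1, ENNReal.ofReal (|deriv f x| ^ p) :=
      lintegral_mono_set (fun x hx => ⟨by linarith [hx.1], hx.2⟩)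
    have heq : ∫⁻ x in Ioo (0 : ℝ) 1, ENNReal.ofReal (|deriv f x| ^ p) = ⊤ := by
      rw [setLIntegral_congr_fun measurableSet_Ioo hkey,
        lintegral_const_mul _ measurable_inv.ennreal_ofReal, htop, ENNReal.mul_top]
      simp only [ne_eq, ENNReal.ofReal_eq_zero, not_le]
      positivity
    rw [heq] at hle
    exact top_le_iff.mp hle
end

section
/- For every integer k ≥ 2 and every α ∈ (0,1] there exists a function v ∈ C^∞(ℝ) with v(x) > 0 for every x ∈ ℝ and all derivatives of v bounded on ℝ (in particular v^{(k)} is α-Hölder continuous on ℝ), such that the ratio |v'(x)|^{k+α} / [v(x)]^{k+α-1} is unbounded on ℝ. (For instance v(x) := sin²x + e^{-x²} works; hence the sign assumption on v' in the higher order Glaeser inequality cannot be dropped.) -/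
open scoped ContDiff

noncomputable section GlaeserAux

private lemma glsr_pow_mul_gauss_le (i : ℕ) (x : ℝ) :
    |x| ^ i * Real.exp (-(x ^ 2 / 2)) ≤ (i.factorial : ℝ) * 2 ^ i + 1 := by
  set A : ℝ := |x| ^ i with hA
  set E : ℝ := Real.exp (x ^ 2 / 2) with hE
  have hEpos : 0 < E := Real.exp_pos _
  have hginv : Real.exp (-(x ^ 2 / 2)) = E⁻¹ := by rw [hE, ← Real.exp_neg]
  have hEinv : E * E⁻¹ = 1 := mul_inv_cancel₀ (ne_of_gt hEpos)
  have hApos : 0 ≤ A := pow_nonneg (abs_nonneg x) i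
  have hterm : A ^ 2 / 2 ^ i / (i.factorial : ℝ) ≤ E := by
    have hsum := Real.sum_le_exp_of_nonneg (by positivity : (0:ℝ) ≤ x ^ 2 / 2) (i + 1)
    have hone : (x ^ 2 / 2) ^ i / (i.factorial : ℝ) ≤ E := by
      refine le_trans ?_ hsum
      exact Finset.single_le_sum (f := fun j => (x ^ 2 / 2) ^ j / (j.factorial : ℝ))
        (fun j _ => by positivity) (Finset.self_mem_range_succ i)
    have : (x ^ 2 / 2) ^ i = A ^ 2 / 2 ^ i := by
      rw [hA, div_pow]
      congr 1
      rw [← pow_mul, ← pow_mul, mul_comm i 2, ← abs_pow,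
        abs_of_nonneg (by rw [pow_mul]; positivity : (0:ℝ) ≤ x ^ (2 * i))]
    rwa [this] at hone
  have hfac : (0:ℝ) < (i.factorial : ℝ) := by positivity
  have h2i : (0:ℝ) < 2 ^ i := by positivity
  have hA2 : A ^ 2 ≤ (i.factorial : ℝ) * 2 ^ i * E := by
    rw [div_div] at hterm
    calc A ^ 2 = (A ^ 2 / (2 ^ i * (i.factorial : ℝ))) * (2 ^ i * (i.factorial : ℝ)) := by
          field_simp
      _ ≤ E * (2 ^ i * (i.factorial : ℝ)) := by
          exact mul_le_mul_of_nonneg_right hterm (by positivity)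
      _ = (i.factorial : ℝ) * 2 ^ i * E := by ring
  rw [hginv]
  rcases le_or_gt A 1 with h | h
  · have : A * E⁻¹ ≤ 1 := by
      have hEinv1 : E⁻¹ ≤ 1 := by
        rw [inv_le_one_iff₀]; right; exact Real.one_le_exp (by positivity)
      nlinarith [inv_pos.2 hEpos]
    nlinarith [hfac, h2i]
  · have key : A * E⁻¹ ≤ (i.factorial : ℝ) * 2 ^ i := by
      have h1 : A * E⁻¹ ≤ A ^ 2 * E⁻¹ := by
        nlinarith [inv_pos.2 hEpos]
      have h2 : A ^ 2 * E⁻¹ ≤ (i.factorial : ℝ) * 2 ^ i * E * E⁻¹ :=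
        mul_le_mul_of_nonneg_right hA2 (le_of_lt (inv_pos.2 hEpos))
      calc A * E⁻¹ ≤ A ^ 2 * E⁻¹ := h1
        _ ≤ (i.factorial : ℝ) * 2 ^ i * E * E⁻¹ := h2
        _ = (i.factorial : ℝ) * 2 ^ i := by rw [mul_assoc, hEinv, mul_one]
    linarith

private lemma glsr_poly_mul_gauss_bounded (P : Polynomial ℝ) :
    ∃ B : ℝ, ∀ x : ℝ, |Polynomial.eval x P| * Real.exp (-(x ^ 2 / 2)) ≤ B := by
  refine ⟨∑ i ∈ Finset.range (P.natDegree + 1),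
    |P.coeff i| * ((i.factorial : ℝ) * 2 ^ i + 1), fun x => ?_⟩
  have hg : 0 ≤ Real.exp (-(x ^ 2 / 2)) := (Real.exp_pos _).le
  have h1 : |Polynomial.eval x P| ≤
      ∑ i ∈ Finset.range (P.natDegree + 1), |P.coeff i| * |x| ^ i := by
    rw [Polynomial.eval_eq_sum_range]
    refine le_trans (Finset.abs_sum_le_sum_abs _ _) ?_
    refine Finset.sum_le_sum fun i _ => ?_
    rw [abs_mul, abs_pow]
  calc |Polynomial.eval x P| * Real.exp (-(x ^ 2 / 2))
      ≤ (∑ i ∈ Finset.range (P.natDegree + 1), |P.coeff i| * |x| ^ i) *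
        Real.exp (-(x ^ 2 / 2)) := mul_le_mul_of_nonneg_right h1 hg
    _ = ∑ i ∈ Finset.range (P.natDegree + 1),
        |P.coeff i| * (|x| ^ i * Real.exp (-(x ^ 2 / 2))) := by
        rw [Finset.sum_mul]; exact Finset.sum_congr rfl fun i _ => by ring
    _ ≤ ∑ i ∈ Finset.range (P.natDegree + 1),
        |P.coeff i| * ((i.factorial : ℝ) * 2 ^ i + 1) :=
        Finset.sum_le_sum fun i _ =>
          mul_le_mul_of_nonneg_left (glsr_pow_mul_gauss_le i x) (abs_nonneg _)

private lemma glsr_periodic_deriv {f : ℝ → ℝ} {c : ℝ} (hf : Function.Periodic f c) :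
    Function.Periodic (deriv f) c := by
  intro x
  have h : (fun y : ℝ => f (y + c)) = f := funext fun y => hf y
  calc deriv f (x + c) = deriv (fun y => f (y + c)) x := (deriv_comp_add_const f c x).symm
    _ = deriv f x := by rw [h]

private lemma glsr_periodic_iteratedDeriv {f : ℝ → ℝ} {c : ℝ}
    (hf : Function.Periodic f c) (n : ℕ) :
    Function.Periodic (iteratedDeriv n f) c := by
  induction n with
  | zero => simpa [iteratedDeriv_zero] using hf
  | succ n ih => rw [iteratedDeriv_succ]; exact glsr_periodic_deriv ih

private lemma glsr_bounded_of_periodic {f : ℝ → ℝ} {c : ℝ} (hf : Continuous f)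
    (hp : Function.Periodic f c) (hc : 0 < c) : ∃ B : ℝ, ∀ x : ℝ, |f x| ≤ B := by
  obtain ⟨B, hB⟩ := (isCompact_Icc (a := (0:ℝ)) (b := c)).exists_bound_of_continuousOn
    hf.continuousOn (f := fun x => f x)
  refine ⟨B, fun x => ?_⟩
  obtain ⟨y, hy, hxy⟩ := hp.exists_mem_Ico₀ hc x
  rw [hxy]
  simpa using hB y ⟨hy.1, hy.2.le⟩

private lemma glsr_holder {f : ℝ → ℝ} {B L : ℝ}
    (hd : Differentiable ℝ f) (hB : ∀ x, |f x| ≤ B) (hL : ∀ x, |deriv f x| ≤ L)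
    {α : ℝ} (hα : α ∈ Set.Ioc (0:ℝ) 1) :
    ∀ x y : ℝ, |f y - f x| ≤ (L + 2 * B) * |y - x| ^ α := by
  obtain ⟨hα0, hα1⟩ := hα
  have hBnn : 0 ≤ B := le_trans (abs_nonneg _) (hB 0)
  have hLnn : 0 ≤ L := le_trans (abs_nonneg _) (hL 0)
  intro x y
  have hmvt : |f y - f x| ≤ L * |y - x| := by
    have := Convex.norm_image_sub_le_of_norm_deriv_le (s := Set.univ)
      (fun z _ => hd z) (fun z _ => hL z) convex_univ (Set.mem_univ x) (Set.mem_univ y)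
    simpa [Real.norm_eq_abs] using this
  rcases eq_or_ne y x with rfl | hne
  · simp [Real.zero_rpow (ne_of_gt hα0), abs_nonneg]
  have habs : 0 < |y - x| := abs_pos.2 (sub_ne_zero.2 hne)
  have hrnn : (0:ℝ) ≤ |y - x| ^ α := Real.rpow_nonneg (abs_nonneg _) α
  rcases le_or_gt (|y - x|) 1 with h1 | h1
  · have key : |y - x| ≤ |y - x| ^ α := by
      calc |y - x| = |y - x| ^ (1:ℝ) := (Real.rpow_one _).symm
        _ ≤ |y - x| ^ α := Real.rpow_le_rpow_of_exponent_ge habs h1 hα1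
    calc |f y - f x| ≤ L * |y - x| := hmvt
      _ ≤ L * |y - x| ^ α := mul_le_mul_of_nonneg_left key hLnn
      _ ≤ (L + 2 * B) * |y - x| ^ α := by nlinarith
  · have key : (1:ℝ) ≤ |y - x| ^ α := Real.one_le_rpow h1.le hα0.le
    calc |f y - f x| ≤ |f y| + |f x| := abs_sub _ _
      _ ≤ 2 * B := by have := hB x; have := hB y; linarith
      _ ≤ 2 * B * |y - x| ^ α := le_mul_of_one_le_right (by linarith) key
      _ ≤ (L + 2 * B) * |y - x| ^ α := by nlinarith

private lemma glsr_gauss_hasDerivAt (x : ℝ) :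
    HasDerivAt (fun y : ℝ => Real.exp (-(y ^ 2 / 2))) (-x * Real.exp (-(x ^ 2 / 2))) x := by
  have h1 : HasDerivAt (fun y : ℝ => -(y ^ 2 / 2)) (-x) x := by
    have := ((hasDerivAt_pow 2 x).div_const 2).neg
    refine this.congr_deriv ?_
    push_cast; ring
  have := h1.exp
  convert this using 1
  ring

private lemma glsr_sinsq_hasDerivAt (x : ℝ) :
    HasDerivAt (fun y : ℝ => Real.sin y ^ 2) (2 * Real.sin x * Real.cos x) x := by
  have := (Real.hasDerivAt_sin x).pow 2
  refine this.congr_deriv ?_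
  push_cast; ring

private lemma glsr_v_hasDerivAt (x : ℝ) :
    HasDerivAt (fun y : ℝ => Real.sin y ^ 2 + Real.exp (-(y ^ 2 / 2)))
      (2 * Real.sin x * Real.cos x - x * Real.exp (-(x ^ 2 / 2))) x := by
  have := (glsr_sinsq_hasDerivAt x).add (glsr_gauss_hasDerivAt x)
  refine this.congr_deriv ?_
  ring

private lemma glsr_contDiff_gauss : ContDiff ℝ (⊤ : ℕ∞) (fun y : ℝ => Real.exp (-(y ^ 2 / 2))) :=
  (((contDiff_id.pow 2).div_const 2).neg).exp

private lemma glsr_contDiff_sinsq : ContDiff ℝ (⊤ : ℕ∞) (fun y : ℝ => Real.sin y ^ 2) :=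
  Real.contDiff_sin.pow 2

private lemma glsr_contDiff_iteratedDeriv {f : ℝ → ℝ} (hf : ContDiff ℝ (⊤ : ℕ∞) f) (n : ℕ) :
    ContDiff ℝ ∞ (iteratedDeriv n f) := by
  rw [iteratedDeriv_eq_iterate]
  exact (hf.of_le (by simp)).iterate_deriv n

private lemma glsr_iteratedDeriv_add {f g : ℝ → ℝ} (hf : ContDiff ℝ (⊤ : ℕ∞) f)
    (hg : ContDiff ℝ (⊤ : ℕ∞) g) (n : ℕ) :
    iteratedDeriv n (fun x => f x + g x) =
      fun x => iteratedDeriv n f x + iteratedDeriv n g x := by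
  induction n with
  | zero => simp [iteratedDeriv_zero]
  | succ n ih =>
    funext x
    rw [iteratedDeriv_succ, iteratedDeriv_succ, iteratedDeriv_succ, ih]
    exact deriv_add
      (((glsr_contDiff_iteratedDeriv hf n).differentiable (by norm_num)) x)
      (((glsr_contDiff_iteratedDeriv hg n).differentiable (by norm_num)) x)

private lemma glsr_gauss_iteratedDeriv (n : ℕ) (x : ℝ) :
    iteratedDeriv n (fun y : ℝ => Real.exp (-(y ^ 2 / 2))) x =
      (-1 : ℝ) ^ n * Polynomial.aeval x (Polynomial.hermite n) * Real.exp (-(x ^ 2 / 2)) := by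
  rw [iteratedDeriv_eq_iterate]
  exact Polynomial.deriv_gaussian_eq_hermite_mul_gaussian n x

/-- All iterated derivatives of `sin² + gaussian` are bounded. -/
private lemma glsr_bounded_iteratedDeriv (n : ℕ) :
    ∃ B : ℝ, ∀ x : ℝ,
      |iteratedDeriv n (fun y : ℝ => Real.sin y ^ 2 + Real.exp (-(y ^ 2 / 2))) x| ≤ B := by
  have hsplit := glsr_iteratedDeriv_add glsr_contDiff_sinsq glsr_contDiff_gauss n
  -- bound for the sin² part
  have hper : Function.Periodic (fun y : ℝ => Real.sin y ^ 2) (2 * Real.pi) := by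
    intro y; simp [Real.sin_add_two_pi]
  obtain ⟨Bs, hBs⟩ := glsr_bounded_of_periodic
    ((glsr_contDiff_iteratedDeriv glsr_contDiff_sinsq n).continuous)
    (glsr_periodic_iteratedDeriv hper n) Real.two_pi_pos
  -- bound for the gaussian part
  obtain ⟨Bg, hBg⟩ := glsr_poly_mul_gauss_bounded ((Polynomial.hermite n).map (algebraMap ℤ ℝ))
  refine ⟨Bs + Bg, fun x => ?_⟩
  rw [hsplit]
  have h2 : |iteratedDeriv n (fun y : ℝ => Real.exp (-(y ^ 2 / 2))) x| ≤ Bg := by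
    rw [glsr_gauss_iteratedDeriv n x, abs_mul, abs_mul, abs_pow, abs_neg, abs_one,
      one_pow, one_mul, Real.abs_exp]
    have : Polynomial.aeval x (Polynomial.hermite n) =
        Polynomial.eval x ((Polynomial.hermite n).map (algebraMap ℤ ℝ)) := by
      rw [Polynomial.aeval_def, Polynomial.eval₂_eq_eval_map]
    rw [this]
    exact hBg x
  calc |iteratedDeriv n (fun y : ℝ => Real.sin y ^ 2) x +
        iteratedDeriv n (fun y : ℝ => Real.exp (-(y ^ 2 / 2))) x|
      ≤ |iteratedDeriv n (fun y : ℝ => Real.sin y ^ 2) x| +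
        |iteratedDeriv n (fun y : ℝ => Real.exp (-(y ^ 2 / 2))) x| := abs_add_le _ _
    _ ≤ Bs + Bg := add_le_add (hBs x) h2

end GlaeserAux

set_option maxHeartbeats 2000000 in
/-- **The sign assumption on `v'` cannot be dropped.**
For every integer `k ≥ 2` and every `α ∈ (0,1]` there exists `v ∈ C^∞(ℝ)` with
`v > 0` everywhere and all derivatives of `v` bounded on ℝ (in particular `v^(k)` is
`α`-Hölder continuous), such that the ratio `|v'(x)|^(k+α) / v(x)^(k+α-1)` is
unbounded on ℝ. -/
theorem glaeser_fails_without_sign_assumption (k : ℕ) (hk : 2 ≤ k) (α : ℝ)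
    (hα : α ∈ Set.Ioc (0 : ℝ) 1) :
    ∃ v : ℝ → ℝ, ContDiff ℝ (⊤ : ℕ∞) v ∧ (∀ x : ℝ, 0 < v x) ∧
      (∀ n : ℕ, ∃ B : ℝ, ∀ x : ℝ, |iteratedDeriv n v x| ≤ B) ∧
      (∃ H : ℝ, 0 ≤ H ∧ ∀ x y : ℝ,
        |iteratedDeriv k v y - iteratedDeriv k v x| ≤ H * |y - x| ^ α) ∧
      (∀ M : ℝ, ∃ x : ℝ, M < |deriv v x| ^ ((k : ℝ) + α) / v x ^ ((k : ℝ) + α - 1)) := by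
  set v : ℝ → ℝ := fun y => Real.sin y ^ 2 + Real.exp (-(y ^ 2 / 2)) with hv
  have hcd : ContDiff ℝ (⊤ : ℕ∞) v := glsr_contDiff_sinsq.add glsr_contDiff_gauss
  have hpos : ∀ x : ℝ, 0 < v x := fun x => by
    have := Real.exp_pos (-(x ^ 2 / 2)); have := sq_nonneg (Real.sin x); simp only [hv]
    nlinarith
  refine ⟨v, hcd, hpos, glsr_bounded_iteratedDeriv, ?_, ?_⟩
  · -- Hölder continuity of the k-th derivative
    obtain ⟨B, hB⟩ := glsr_bounded_iteratedDeriv k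
    obtain ⟨L, hL⟩ := glsr_bounded_iteratedDeriv (k + 1)
    have hd : Differentiable ℝ (iteratedDeriv k v) :=
      (glsr_contDiff_iteratedDeriv hcd k).differentiable (by norm_num)
    have hL' : ∀ x, |deriv (iteratedDeriv k v) x| ≤ L := by
      intro x; rw [← iteratedDeriv_succ]; exact hL x
    refine ⟨L + 2 * B, ?_, glsr_holder hd hB hL' hα⟩
    have hBnn : 0 ≤ B := le_trans (abs_nonneg _) (hB 0)
    have hLnn : 0 ≤ L := le_trans (abs_nonneg _) (hL' 0)
    linarith
  · -- unboundedness of the ratio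
    intro M₀
    set M : ℝ := max M₀ 1 with hM
    have hMpos : 0 < M := lt_of_lt_of_le one_pos (le_max_right _ _)
    suffices h : ∃ x : ℝ, M < |deriv v x| ^ ((k : ℝ) + α) / v x ^ ((k : ℝ) + α - 1) by
      obtain ⟨x, hx⟩ := h
      exact ⟨x, lt_of_le_of_lt (le_max_left _ _) hx⟩
    obtain ⟨hα0, hα1⟩ := hα
    set p : ℝ := (k : ℝ) + α with hp
    have hk2 : (2 : ℝ) ≤ (k : ℝ) := by exact_mod_cast hk
    have hp2 : 2 < p := by simp only [hp]; linarith
    have hppos : 0 < p := by linarith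
    -- choose n
    obtain ⟨n, hn⟩ := exists_nat_gt
      (max 1 ((Real.log M + (2 * p - 1) * Real.log 2) / (9 * (p - 2))))
    have hn1 : (1 : ℝ) ≤ (n : ℝ) := le_of_lt (lt_of_le_of_lt (le_max_left _ _) hn)
    have hnlog : (Real.log M + (2 * p - 1) * Real.log 2) / (9 * (p - 2)) < (n : ℝ) :=
      lt_of_le_of_lt (le_max_right _ _) hn
    have hπ : (3 : ℝ) < Real.pi := Real.pi_gt_three
    set a : ℝ := (n : ℝ) * (2 * Real.pi) with ha
    have ha6 : 6 ≤ a := by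
      have : (n : ℝ) * 6 ≤ (n : ℝ) * (2 * Real.pi) := by nlinarith
      nlinarith
    have hapos : 0 < a := by linarith
    set ε : ℝ := Real.exp (-(a ^ 2 / 4)) with hε
    have hε0 : 0 < ε := Real.exp_pos _
    have hεhalf : ε ≤ 1 / 2 := by
      have h1 : ε ≤ Real.exp (-1) := by
        apply Real.exp_le_exp.2; nlinarith
      have h2 : Real.exp (-1) ≤ 1 / 2 := by
        rw [Real.exp_neg]
        have : (2 : ℝ) ≤ Real.exp 1 := by
          have := Real.add_one_le_exp (1 : ℝ); linarith
        rw [inv_le_comm₀ (Real.exp_pos 1) (by norm_num)] at *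
        · linarith [this]
      linarith
    set x : ℝ := a + ε with hx
    have hxpos : 0 < x := by linarith
    have hxle : x ≤ a + 1 := by linarith
    -- x * ε ≤ 1/2
    have hxε : x * ε ≤ 1 / 2 := by
      have hexp : 1 + a ^ 2 / 4 + (a ^ 2 / 4) ^ 2 / 2 ≤ Real.exp (a ^ 2 / 4) := by
        have := Real.sum_le_exp_of_nonneg (by positivity : (0:ℝ) ≤ a ^ 2 / 4) 3
        simpa [Finset.sum_range_succ, Nat.factorial] using this
      have h2a : 2 * (a + 1) ≤ Real.exp (a ^ 2 / 4) := by nlinarith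
      have hεinv : ε = (Real.exp (a ^ 2 / 4))⁻¹ := by rw [hε, ← Real.exp_neg]
      have : (a + 1) * ε ≤ 1 / 2 := by
        rw [hεinv]
        rw [mul_inv_le_iff₀ (Real.exp_pos _)]
        linarith
      have hx2 : x * ε ≤ (a + 1) * ε := mul_le_mul_of_nonneg_right hxle hε0.le
      exact le_trans hx2 this
    -- trig values at x
    have hsin : Real.sin x = Real.sin ε := by
      rw [hx, ha, add_comm]
      exact Real.sin_add_nat_mul_two_pi ε n
    have hcos : Real.cos x = Real.cos ε := by
      rw [hx, ha, add_comm]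
      exact Real.cos_add_nat_mul_two_pi ε n
    have hsin_ub : Real.sin ε < ε := Real.sin_lt hε0
    have hsin_pos : 0 < Real.sin ε :=
      Real.sin_pos_of_pos_of_lt_pi hε0 (by nlinarith)
    have hsin_lb : (15 / 16 : ℝ) * ε ≤ Real.sin ε := by
      have h3 := Real.sin_gt_sub_cube hε0
      have hsq : ε ^ 2 ≤ 1 / 4 := by nlinarith
      have hcube : ε ^ 3 ≤ ε / 4 := by nlinarith [mul_le_mul_of_nonneg_left hsq hε0.le]
      linarith
    have hcos_lb : (7 / 8 : ℝ) ≤ Real.cos ε := by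
      have := Real.one_sub_sq_div_two_le_cos (x := ε)
      nlinarith
    -- gaussian at x is at most ε²
    have hε2 : ε ^ 2 = Real.exp (-(a ^ 2 / 2)) := by
      rw [hε, sq, ← Real.exp_add]; ring_nf
    have hgauss_ub : Real.exp (-(x ^ 2 / 2)) ≤ ε ^ 2 := by
      rw [hε2]
      apply Real.exp_le_exp.2
      nlinarith
    have hgauss_pos : 0 < Real.exp (-(x ^ 2 / 2)) := Real.exp_pos _
    -- value bound
    have hv_ub : v x ≤ 2 * ε ^ 2 := by
      simp only [hv]
      rw [hsin]
      nlinarith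
    -- derivative bound
    have hderiv : deriv v x = 2 * Real.sin x * Real.cos x - x * Real.exp (-(x ^ 2 / 2)) :=
      (glsr_v_hasDerivAt x).deriv
    have hd_lb : ε / 2 ≤ deriv v x := by
      rw [hderiv, hsin, hcos]
      have h1 : x * Real.exp (-(x ^ 2 / 2)) ≤ ε / 2 := by
        have : x * Real.exp (-(x ^ 2 / 2)) ≤ x * ε ^ 2 :=
          mul_le_mul_of_nonneg_left hgauss_ub hxpos.le
        nlinarith
      nlinarith
    have hd_abs : ε / 2 ≤ |deriv v x| := le_trans hd_lb (le_abs_self _)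
    -- ratio estimate
    have hnum : (ε / 2) ^ p ≤ |deriv v x| ^ p :=
      Real.rpow_le_rpow (by positivity) hd_abs hppos.le
    have hden : v x ^ (p - 1) ≤ (2 * ε ^ 2) ^ (p - 1) :=
      Real.rpow_le_rpow (hpos x).le hv_ub (by linarith)
    have hdenpos : 0 < v x ^ (p - 1) := Real.rpow_pos_of_pos (hpos x) _
    have hratio : (ε / 2) ^ p / (2 * ε ^ 2) ^ (p - 1) ≤
        |deriv v x| ^ p / v x ^ (p - 1) :=
      div_le_div₀ (Real.rpow_nonneg (abs_nonneg _) p) hnum hdenpos hden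
    -- compute the model ratio as an exponential
    have hR : (ε / 2) ^ p / (2 * ε ^ 2) ^ (p - 1) =
        Real.exp (a ^ 2 / 4 * (p - 2) - (2 * p - 1) * Real.log 2) := by
      rw [Real.rpow_def_of_pos (by positivity), Real.rpow_def_of_pos (by positivity),
        ← Real.exp_sub]
      congr 1
      have hlogε : Real.log ε = -(a ^ 2 / 4) := Real.log_exp _
      have h1 : Real.log (ε / 2) = -(a ^ 2 / 4) - Real.log 2 := by
        rw [Real.log_div (ne_of_gt hε0) two_ne_zero, hlogε]
      have h2 : Real.log (2 * ε ^ 2) = Real.log 2 + 2 * -(a ^ 2 / 4) := by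
        rw [Real.log_mul two_ne_zero (by positivity), Real.log_pow, hlogε]
        push_cast; ring
      rw [h1, h2]; ring
    have hfinal : M < (ε / 2) ^ p / (2 * ε ^ 2) ^ (p - 1) := by
      rw [hR, ← Real.exp_log hMpos]
      clear_value x ε a p M
      apply Real.exp_lt_exp.2
      have h9 : Real.log M + (2 * p - 1) * Real.log 2 < 9 * (p - 2) * (n : ℝ) := by
        have h := (div_lt_iff₀ (by nlinarith : (0:ℝ) < 9 * (p - 2))).1 hnlog
        linarith [h]
      have ha2 : 9 * (n : ℝ) ≤ a ^ 2 / 4 := by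
        have : a ^ 2 / 4 = Real.pi ^ 2 * (n : ℝ) ^ 2 := by rw [ha]; ring
        rw [this]
        nlinarith
      have : 9 * (p - 2) * (n : ℝ) ≤ a ^ 2 / 4 * (p - 2) := by nlinarith
      linarith
    exact ⟨x, lt_of_lt_of_le hfinal hratio⟩
end
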